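/- arXiv:1311.0784 — 5 statements merged into one kernel-verified Lean document; each statement's English description precedes it below -/
import Mathlib

section
/- Let F : ℝ → ℝ be C² with ∂F/∂u a decreasing diffeomorphism onto (0,1) with inverse G, and set γ(x) = -∂²F/∂u²(G(x)). Suppose the limit l := lim_{x→0⁺} e^{2G(x)} γ(x) exists, is finite and positive. Then lim_{x→0⁺} γ(x)/x = 2. -/
open Filter Set Real Topology

/-- if `γ(x) = -F''(G x)` and `e^{2G(x)} γ(x) → l` with `0 < l < ∞`
as `x → 0⁺`, then `γ(x)/x → 2` as `x → 0⁺`. -/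
theorem stmt8 (F G : ℝ → ℝ) (l : ℝ)
    (hF : ContDiff ℝ 2 F)
    (hanti : StrictAnti (deriv F))
    (hrange : ∀ u, deriv F u ∈ Set.Ioo (0:ℝ) 1)
    (hGl : ∀ u, G (deriv F u) = u)
    (hGr : ∀ x ∈ Set.Ioo (0:ℝ) 1, deriv F (G x) = x)
    (hl : 0 < l)
    (hlim : Filter.Tendsto (fun x => Real.exp (2 * G x) * (-(deriv (deriv F) (G x))))
      (nhdsWithin 0 (Set.Ioi 0)) (nhds l)) :
    Filter.Tendsto (fun x => (-(deriv (deriv F) (G x))) / x)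
      (nhdsWithin 0 (Set.Ioi 0)) (nhds 2) := by
  -- `deriv F` is C¹, hence differentiable with derivative `deriv (deriv F)`
  have hF1 : ContDiff ℝ 1 (deriv F) := by
    have h2 : ContDiff ℝ ((1 : ℕ) + 1 : ℕ) F := by exact_mod_cast hF
    exact ((contDiff_succ_iff_deriv).mp h2).2.2
  have hd2 : ∀ u, HasDerivAt (deriv F) (deriv (deriv F) u) u := fun u =>
    ((hF1.differentiable one_ne_zero) u).hasDerivAt
  -- basic order facts about G
  have hGlt : ∀ {x u : ℝ}, x ∈ Ioo (0:ℝ) 1 → x < deriv F u → u < G x := by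
    intro x u hx h
    by_contra hc
    push_neg at hc
    have := hanti.antitone hc
    rw [hGr x hx] at this
    linarith
  have hGgt : ∀ {x u : ℝ}, x ∈ Ioo (0:ℝ) 1 → deriv F u < x → G x < u := by
    intro x u hx h
    by_contra hc
    push_neg at hc
    have := hanti.antitone hc
    rw [hGr x hx] at this
    linarith
  -- continuity of G on (0,1)
  have hGcont : ∀ x₀ ∈ Ioo (0:ℝ) 1, ContinuousAt G x₀ := by
    intro x₀ hx₀
    rw [ContinuousAt, tendsto_order]
    constructor
    · intro a ha
      have h1 : x₀ < deriv F a := by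
        have := hanti ha
        rwa [hGr x₀ hx₀] at this
      have hmem : Ioo (0:ℝ) 1 ∩ Iio (deriv F a) ∈ 𝓝 x₀ :=
        inter_mem (isOpen_Ioo.mem_nhds hx₀) (Iio_mem_nhds h1)
      filter_upwards [hmem] with x hx
      exact hGlt hx.1 hx.2
    · intro b hb
      have h1 : deriv F b < x₀ := by
        have := hanti hb
        rwa [hGr x₀ hx₀] at this
      have hmem : Ioo (0:ℝ) 1 ∩ Ioi (deriv F b) ∈ 𝓝 x₀ :=
        inter_mem (isOpen_Ioo.mem_nhds hx₀) (Ioi_mem_nhds h1)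
      filter_upwards [hmem] with x hx
      exact hGgt hx.1 hx.2
  -- G → +∞ as x → 0⁺
  have hGtop : Tendsto G (𝓝[>] (0:ℝ)) atTop := by
    rw [tendsto_atTop]
    intro M
    have hM := hrange M
    have hmem : Ioo (0:ℝ) (deriv F M) ∈ 𝓝[>] (0:ℝ) := Ioo_mem_nhdsGT hM.1
    filter_upwards [hmem] with x hx
    have hx1 : x ∈ Ioo (0:ℝ) 1 := ⟨hx.1, hx.2.trans hM.2⟩
    exact (hGlt hx1 hx.2).le
  -- eventually γ > 0 near 0⁺; extract δ
  have hev : ∀ᶠ x in 𝓝[>] (0:ℝ), 0 < -(deriv (deriv F) (G x)) := by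
    filter_upwards [hlim.eventually (eventually_gt_nhds (half_lt_self hl))] with x hx
    nlinarith [Real.exp_pos (2 * G x)]
  obtain ⟨u, hu, hsub⟩ := mem_nhdsGT_iff_exists_Ioo_subset.mp hev
  set δ : ℝ := min u 1 with hδdef
  have hδ0 : 0 < δ := lt_min hu one_pos
  have hδmem : ∀ x ∈ Ioo (0:ℝ) δ, x ∈ Ioo (0:ℝ) 1 ∧ 0 < -(deriv (deriv F) (G x)) := by
    intro x hx
    refine ⟨⟨hx.1, lt_of_lt_of_le hx.2 (min_le_right _ _)⟩,
      hsub ⟨hx.1, lt_of_lt_of_le hx.2 (min_le_left _ _)⟩⟩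
  -- derivative of G
  have hG' : ∀ x ∈ Ioo (0:ℝ) δ, HasDerivAt G (deriv (deriv F) (G x))⁻¹ x := by
    intro x hx
    obtain ⟨hx1, hγ⟩ := hδmem x hx
    refine HasDerivAt.of_local_left_inverse (hGcont x hx1) (hd2 (G x)) (by linarith) ?_
    filter_upwards [isOpen_Ioo.mem_nhds hx1] with y hy using hGr y hy
  -- the function f = e^{-2G} and its derivative
  set f : ℝ → ℝ := fun x => Real.exp (-(2 * G x)) with hfdef
  set f' : ℝ → ℝ := fun x => Real.exp (-(2 * G x)) * (-2 * (deriv (deriv F) (G x))⁻¹)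
    with hf'def
  have hf : ∀ x ∈ Ioo (0:ℝ) δ, HasDerivAt f (f' x) x := by
    intro x hx
    have h1 : HasDerivAt (fun y => -(2 * G y)) (-2 * (deriv (deriv F) (G x))⁻¹) x := by
      have := ((hG' x hx).const_mul (2:ℝ)).neg
      rw [show -2 * (deriv (deriv F) (G x))⁻¹ = -(2 * (deriv (deriv F) (G x))⁻¹) by ring]
      exact this
    exact h1.exp
  -- f → 0 at 0⁺
  have hfa : Tendsto f (𝓝[>] (0:ℝ)) (𝓝 0) := by
    have h1 : Tendsto (fun x => -(2 * G x)) (𝓝[>] (0:ℝ)) atBot := by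
      have := (tendsto_const_mul_atBot_of_neg (r := (-2:ℝ)) (by norm_num)).mpr hGtop
      simpa [neg_mul] using this
    exact Real.tendsto_exp_atBot.comp h1
  -- f'/1 → 2/l
  have hdiv : Tendsto (fun x => f' x / (1:ℝ)) (𝓝[>] (0:ℝ)) (𝓝 (2 / l)) := by
    have h2 : Tendsto (fun x => 2 / (Real.exp (2 * G x) * (-(deriv (deriv F) (G x)))))
        (𝓝[>] (0:ℝ)) (𝓝 (2 / l)) := tendsto_const_nhds.div hlim (ne_of_gt hl)
    refine h2.congr' ?_
    filter_upwards [hev] with x hγ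
    have he := Real.exp_ne_zero (2 * G x)
    have hd : deriv (deriv F) (G x) ≠ 0 := by intro h; rw [h] at hγ; simp at hγ
    simp only [hf'def, Real.exp_neg, div_one]
    field_simp
  -- L'Hôpital
  have hlhop : Tendsto (fun x => f x / x) (𝓝[>] (0:ℝ)) (𝓝 (2 / l)) := by
    have := HasDerivAt.lhopital_zero_right_on_Ioo (f := f) (f' := f') (g := fun x => x)
      (g' := fun _ => (1:ℝ)) hδ0 hf (fun x _ => hasDerivAt_id x)
      (fun x _ => one_ne_zero) hfa (tendsto_id.mono_left nhdsWithin_le_nhds) hdiv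
    exact this
  -- combine
  have hmul := hlim.mul hlhop
  have : l * (2 / l) = 2 := by field_simp
  rw [this] at hmul
  refine hmul.congr fun x => ?_
  have he := Real.exp_ne_zero (2 * G x)
  simp only [hfdef, Real.exp_neg]
  have h1 : Real.exp (2 * G x) * (-deriv (deriv F) (G x)) * ((Real.exp (2 * G x))⁻¹ / x)
      = (Real.exp (2 * G x) * (Real.exp (2 * G x))⁻¹) * (-deriv (deriv F) (G x) / x) := by
    ring
  rw [h1, mul_inv_cancel₀ he, one_mul]
end

section
/- Let γ : [0,1] → ℝ be continuous, positive on (0,1), with γ(x) = 2min(x,1-x) + O(min(x,1-x)²) near 0 and 1. Set g = 1/γ on (0,1), G_g(x) = -∫_{1/2}^x g(s) ds, and L_g(x) = ∫_{1/2}^x G_g(s) ds. Then L_g is strictly concave on (0,1), bounded on (0,1), and x ↦ L_g'(x) = G_g(x) is a C¹-diffeomorphism from (0,1) onto ℝ. -/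
open MeasureTheory

lemma stmt10_bounds (γ : ℝ → ℝ)
    (hcont : ContinuousOn γ (Set.Icc 0 1))
    (hpos : ∀ x ∈ Set.Ioo (0:ℝ) 1, 0 < γ x)
    (hO : ∃ C > (0:ℝ), ∀ x ∈ Set.Ioo (0:ℝ) 1,
      |γ x - 2 * min x (1-x)| ≤ C * (min x (1-x))^2) :
    ∃ c K : ℝ, 0 < c ∧ 0 < K ∧ ∀ x ∈ Set.Ioo (0:ℝ) 1,
      c * min x (1-x) ≤ γ x ∧ γ x ≤ K * min x (1-x) := by
  obtain ⟨C, hC, hOC⟩ := hO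
  set δ : ℝ := min (1/(2*C)) (1/4) with hδdef
  have hδpos : 0 < δ := lt_min (by positivity) (by norm_num)
  have hδ4 : δ ≤ 1/4 := min_le_right _ _
  have hδC : δ ≤ 1/(2*C) := min_le_left _ _
  have hsub : Set.Icc δ (1-δ) ⊆ Set.Ioo (0:ℝ) 1 := by
    intro x hx
    constructor
    · linarith [hx.1]
    · linarith [hx.2]
  have hne : (Set.Icc δ (1-δ)).Nonempty := ⟨δ, le_refl _, by linarith⟩
  obtain ⟨x₀, hx₀, hmin⟩ := (isCompact_Icc (a := δ) (b := 1-δ)).exists_isMinOn hne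
    (hcont.mono (fun x hx => ⟨by linarith [hx.1, hδpos], by linarith [hx.2, hδpos]⟩))
  have hε : 0 < γ x₀ := hpos x₀ (hsub hx₀)
  refine ⟨min 1 (2 * γ x₀), 2 + C/2, lt_min one_pos (by positivity), by positivity, ?_⟩
  intro x hx
  set m := min x (1-x) with hm
  have hm0 : 0 < m := lt_min hx.1 (by linarith [hx.2])
  have hm2 : m ≤ 1/2 := by
    rcases min_le_iff.mpr (Or.inl (le_refl x)) with h
    rcases le_total x (1-x) with h1 | h1
    · rw [hm, min_eq_left h1]; linarith
    · rw [hm, min_eq_right h1]; linarith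
  have hOx := hOC x hx
  have habs := abs_le.mp hOx
  constructor
  · rcases le_total m δ with hmd | hmd
    · have hCm : C * m ≤ 1/2 := by
        have : m ≤ 1/(2*C) := le_trans hmd hδC
        rw [le_div_iff₀ (by positivity)] at this
        nlinarith
      have h1 : 2*m - C*m^2 ≤ γ x := by nlinarith [habs.1]
      have h2 : min 1 (2 * γ x₀) * m ≤ 1 * m :=
        mul_le_mul_of_nonneg_right (min_le_left _ _) hm0.le
      nlinarith
    · have hxmem : x ∈ Set.Icc δ (1-δ) := by
        constructor
        · exact le_trans hmd (min_le_left _ _)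
        · have : δ ≤ 1 - x := le_trans hmd (min_le_right _ _)
          linarith
      have h1 : γ x₀ ≤ γ x := hmin hxmem
      have h2 : min 1 (2 * γ x₀) * m ≤ (2 * γ x₀) * m :=
        mul_le_mul_of_nonneg_right (min_le_right _ _) hm0.le
      nlinarith
  · nlinarith [habs.2]



lemma stmt10_logint {x : ℝ} (hx : 0 < x) (hx2 : x ≤ 1/2) :
    ∫ s in x..(1/2:ℝ), (Real.log (1/2) - Real.log s) ≤ 1/2 := by
  have h0 : (0:ℝ) ∉ Set.uIcc x (1/2:ℝ) := Set.notMem_uIcc_of_lt hx (by norm_num)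
  have hlogint : IntervalIntegrable Real.log volume x (1/2) :=
    intervalIntegral.intervalIntegrable_log h0
  rw [intervalIntegral.integral_sub intervalIntegrable_const hlogint,
    intervalIntegral.integral_const, integral_log, smul_eq_mul]
  have hlog : Real.log x ≤ Real.log (1/2) := Real.log_le_log hx hx2
  have hlogx : Real.log (1/2) < 0 := Real.log_neg (by norm_num) (by norm_num)
  nlinarith [mul_nonneg hx.le (sub_nonneg.mpr hlog)]

/-- for `γ ∈ 𝒢`, with `g = 1/γ`, `G_g(x) = -∫_{1/2}^x g`, and
`L_g(x) = ∫_{1/2}^x G_g`, the function `L_g` is strictly concave and bounded on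
`(0,1)`, its derivative is `G_g`, and `G_g` is a C¹-diffeomorphism from `(0,1)`
onto `ℝ`. -/
theorem stmt10 (γ Gg L : ℝ → ℝ)
    (hcont : ContinuousOn γ (Set.Icc 0 1))
    (hpos : ∀ x ∈ Set.Ioo (0:ℝ) 1, 0 < γ x)
    (hO : ∃ C > (0:ℝ), ∀ x ∈ Set.Ioo (0:ℝ) 1,
      |γ x - 2 * min x (1-x)| ≤ C * (min x (1-x))^2)
    (hGg : ∀ x, Gg x = -∫ s in (1/2:ℝ)..x, (γ s)⁻¹)
    (hL : ∀ x, L x = ∫ s in (1/2:ℝ)..x, Gg s) :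
    StrictConcaveOn ℝ (Set.Ioo 0 1) L ∧
    (∃ a b : ℝ, ∀ x ∈ Set.Ioo (0:ℝ) 1, a ≤ L x ∧ L x ≤ b) ∧
    (∀ x ∈ Set.Ioo (0:ℝ) 1, deriv L x = Gg x) ∧
    ContDiffOn ℝ 1 Gg (Set.Ioo 0 1) ∧
    Set.BijOn Gg (Set.Ioo 0 1) Set.univ := by
  obtain ⟨c, K, hc, hK, hcK⟩ := stmt10_bounds γ hcont hpos hO
  have hhalf : (1/2:ℝ) ∈ Set.Ioo (0:ℝ) 1 := by norm_num
  -- continuity of g = γ⁻¹ on (0,1)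
  have hgcont : ContinuousOn (fun s => (γ s)⁻¹) (Set.Ioo 0 1) :=
    (hcont.mono Set.Ioo_subset_Icc_self).inv₀ (fun x hx => (hpos x hx).ne')
  have hgint : ∀ a ∈ Set.Ioo (0:ℝ) 1, ∀ b ∈ Set.Ioo (0:ℝ) 1,
      IntervalIntegrable (fun s => (γ s)⁻¹) volume a b := fun a ha b hb =>
    (hgcont.mono (Set.ordConnected_Ioo.uIcc_subset ha hb)).intervalIntegrable
  -- derivative of Gg
  have hGgfun : Gg = fun u => -∫ s in (1/2:ℝ)..u, (γ s)⁻¹ := funext hGg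
  have hGg' : ∀ x ∈ Set.Ioo (0:ℝ) 1, HasDerivAt Gg (-(γ x)⁻¹) x := by
    intro x hx
    have h1 : HasDerivAt (fun u => ∫ s in (1/2:ℝ)..u, (γ s)⁻¹) ((γ x)⁻¹) x :=
      intervalIntegral.integral_hasDerivAt_right (hgint _ hhalf _ hx)
        (hgcont.stronglyMeasurableAtFilter isOpen_Ioo x hx)
        (hgcont.continuousAt (isOpen_Ioo.mem_nhds hx))
    rw [hGgfun]
    exact h1.neg
  have hGgcont : ContinuousOn Gg (Set.Ioo 0 1) := fun x hx =>
    (hGg' x hx).continuousAt.continuousWithinAt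
  have hGgint : ∀ a ∈ Set.Ioo (0:ℝ) 1, ∀ b ∈ Set.Ioo (0:ℝ) 1,
      IntervalIntegrable Gg volume a b := fun a ha b hb =>
    (hGgcont.mono (Set.ordConnected_Ioo.uIcc_subset ha hb)).intervalIntegrable
  -- derivative of L
  have hLfun : L = fun u => ∫ s in (1/2:ℝ)..u, Gg s := funext hL
  have hL' : ∀ x ∈ Set.Ioo (0:ℝ) 1, HasDerivAt L (Gg x) x := by
    intro x hx
    rw [hLfun]
    exact intervalIntegral.integral_hasDerivAt_right (hGgint _ hhalf _ hx)
      (hGgcont.stronglyMeasurableAtFilter isOpen_Ioo x hx)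
      (hGgcont.continuousAt (isOpen_Ioo.mem_nhds hx))
  have hderivL : ∀ x ∈ Set.Ioo (0:ℝ) 1, deriv L x = Gg x := fun x hx => (hL' x hx).deriv
  -- Gg strictly antitone
  have hGganti : StrictAntiOn Gg (Set.Ioo 0 1) := by
    apply strictAntiOn_of_deriv_neg (convex_Ioo 0 1) hGgcont
    intro x hx
    rw [interior_Ioo] at hx
    rw [(hGg' x hx).deriv]
    simp only [neg_neg, Left.neg_neg_iff]
    exact inv_pos.mpr (hpos x hx)
  -- strict concavity of L
  have hconc : StrictConcaveOn ℝ (Set.Ioo 0 1) L := by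
    apply StrictAntiOn.strictConcaveOn_of_deriv (convex_Ioo 0 1)
      (fun x hx => (hL' x hx).continuousAt.continuousWithinAt)
    rw [interior_Ioo]
    intro a ha b hb hab
    rw [hderivL a ha, hderivL b hb]
    exact hGganti ha hb hab
  -- ContDiffOn
  have hcd : ContDiffOn ℝ 1 Gg (Set.Ioo 0 1) := by
    rw [show (1 : WithTop ℕ∞) = 0 + 1 from (zero_add 1).symm,
      contDiffOn_succ_iff_deriv_of_isOpen isOpen_Ioo]
    refine ⟨fun x hx => (hGg' x hx).differentiableAt.differentiableWithinAt, by simp, ?_⟩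
    rw [contDiffOn_zero]
    exact (hgcont.neg).congr (fun x hx => (hGg' x hx).deriv)

  -- key pointwise integral bounds
  have hGgsym : ∀ x, Gg x = ∫ s in x..(1/2:ℝ), (γ s)⁻¹ := by
    intro x
    rw [hGg x, intervalIntegral.integral_symm, neg_neg]
  have key_left : ∀ x ∈ Set.Ioo (0:ℝ) 1, x ≤ 1/2 →
      K⁻¹ * (Real.log (1/2) - Real.log x) ≤ Gg x ∧
      Gg x ≤ c⁻¹ * (Real.log (1/2) - Real.log x) := by
    intro x hx hx2
    have h0x : (0:ℝ) < x := hx.1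
    have hIccsub : Set.Icc x (1/2:ℝ) ⊆ Set.Ioo (0:ℝ) 1 := fun s hs =>
      ⟨lt_of_lt_of_le h0x hs.1, lt_of_le_of_lt hs.2 (by norm_num)⟩
    have h0 : (0:ℝ) ∉ Set.uIcc x (1/2:ℝ) := Set.notMem_uIcc_of_lt h0x (by norm_num)
    have hII : ∀ d : ℝ, 0 < d → IntervalIntegrable (fun s => (d*s)⁻¹) volume x (1/2) := by
      intro d hd
      apply intervalIntegral.intervalIntegrable_inv
      · intro s hs
        rw [Set.uIcc_of_le hx2] at hs
        exact (mul_pos hd (lt_of_lt_of_le h0x hs.1)).ne'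
      · exact (continuousOn_const.mul continuousOn_id)
    have hval : ∀ d : ℝ, 0 < d →
        ∫ s in x..(1/2:ℝ), (d*s)⁻¹ = d⁻¹ * (Real.log (1/2) - Real.log x) := by
      intro d hd
      simp only [mul_inv]
      rw [intervalIntegral.integral_const_mul, integral_inv h0,
        Real.log_div (by norm_num) h0x.ne']
    have hmono1 : ∫ s in x..(1/2:ℝ), (K*s)⁻¹ ≤ ∫ s in x..(1/2:ℝ), (γ s)⁻¹ := by
      apply intervalIntegral.integral_mono_on hx2 (hII K hK) (hgint x hx _ hhalf)
      intro s hs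
      have hsmem := hIccsub hs
      have hmin : min s (1-s) = s := min_eq_left (by linarith [hs.2])
      have := (hcK s hsmem).2
      rw [hmin] at this
      exact inv_anti₀ (hpos s hsmem) this
    have hmono2 : ∫ s in x..(1/2:ℝ), (γ s)⁻¹ ≤ ∫ s in x..(1/2:ℝ), (c*s)⁻¹ := by
      apply intervalIntegral.integral_mono_on hx2 (hgint x hx _ hhalf) (hII c hc)
      intro s hs
      have hsmem := hIccsub hs
      have hmin : min s (1-s) = s := min_eq_left (by linarith [hs.2])
      have := (hcK s hsmem).1
      rw [hmin] at this
      exact inv_anti₀ (mul_pos hc (lt_of_lt_of_le h0x hs.1)) this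
    rw [hval K hK] at hmono1
    rw [hval c hc] at hmono2
    rw [hGgsym x]
    exact ⟨hmono1, hmono2⟩
  have key_right : ∀ x ∈ Set.Ioo (0:ℝ) 1, 1/2 ≤ x →
      Gg x ≤ K⁻¹ * (Real.log (1-x) - Real.log (1/2)) ∧
      c⁻¹ * (Real.log (1-x) - Real.log (1/2)) ≤ Gg x := by
    intro x hx hx2
    have h1x : x < 1 := hx.2
    have hIccsub : Set.Icc (1/2:ℝ) x ⊆ Set.Ioo (0:ℝ) 1 := fun s hs =>
      ⟨lt_of_lt_of_le (by norm_num) hs.1, lt_of_le_of_lt hs.2 h1x⟩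
    have hII : ∀ d : ℝ, 0 < d →
        IntervalIntegrable (fun s => (d*(1-s))⁻¹) volume (1/2) x := by
      intro d hd
      apply intervalIntegral.intervalIntegrable_inv
      · intro s hs
        rw [Set.uIcc_of_le hx2] at hs
        exact (mul_pos hd (by linarith [hs.2] : (0:ℝ) < 1 - s)).ne'
      · exact (continuousOn_const.mul (continuousOn_const.sub continuousOn_id))
    have hval : ∀ d : ℝ, 0 < d →
        ∫ s in (1/2:ℝ)..x, (d*(1-s))⁻¹ = d⁻¹ * (Real.log (1/2) - Real.log (1-x)) := by
      intro d hd
      have hu : ∫ s in (1/2:ℝ)..x, (1-s)⁻¹ = Real.log (1/2) - Real.log (1-x) := by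
        have hcs := intervalIntegral.integral_comp_sub_left (a := (1/2:ℝ)) (b := x)
          (fun u => u⁻¹) 1
        rw [hcs, show (1:ℝ) - 1/2 = 1/2 by norm_num,
          integral_inv (Set.notMem_uIcc_of_lt (by linarith) (by norm_num)),
          Real.log_div (by norm_num) (by linarith : (0:ℝ) < 1 - x).ne']
      simp only [mul_inv]
      rw [intervalIntegral.integral_const_mul, hu]
    have hmono1 : ∫ s in (1/2:ℝ)..x, (K*(1-s))⁻¹ ≤ ∫ s in (1/2:ℝ)..x, (γ s)⁻¹ := by
      apply intervalIntegral.integral_mono_on hx2 (hII K hK) (hgint _ hhalf x hx)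
      intro s hs
      have hsmem := hIccsub hs
      have hmin : min s (1-s) = 1 - s := min_eq_right (by linarith [hs.1])
      have := (hcK s hsmem).2
      rw [hmin] at this
      exact inv_anti₀ (hpos s hsmem) this
    have hmono2 : ∫ s in (1/2:ℝ)..x, (γ s)⁻¹ ≤ ∫ s in (1/2:ℝ)..x, (c*(1-s))⁻¹ := by
      apply intervalIntegral.integral_mono_on hx2 (hgint _ hhalf x hx) (hII c hc)
      intro s hs
      have hsmem := hIccsub hs
      have hmin : min s (1-s) = 1 - s := min_eq_right (by linarith [hs.1])
      have := (hcK s hsmem).1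
      rw [hmin] at this
      exact inv_anti₀ (mul_pos hc (by linarith [hs.2] : (0:ℝ) < 1 - s)) this
    rw [hval K hK] at hmono1
    rw [hval c hc] at hmono2
    constructor
    · rw [hGg x]
      linarith
    · rw [hGg x]
      linarith
  -- sign of Gg
  have hGgnonneg : ∀ s ∈ Set.Ioo (0:ℝ) 1, s ≤ 1/2 → 0 ≤ Gg s := by
    intro s hs hs2
    have h := (key_left s hs hs2).1
    have hlog : Real.log s ≤ Real.log (1/2) := Real.log_le_log hs.1 hs2
    have : (0:ℝ) ≤ K⁻¹ * (Real.log (1/2) - Real.log s) :=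
      mul_nonneg (by positivity) (by linarith)
    linarith
  have hGgnonpos : ∀ s ∈ Set.Ioo (0:ℝ) 1, 1/2 ≤ s → Gg s ≤ 0 := by
    intro s hs hs2
    have h := (key_right s hs hs2).1
    have hlog : Real.log (1-s) ≤ Real.log (1/2) :=
      Real.log_le_log (by linarith [hs.2]) (by linarith)
    have : K⁻¹ * (Real.log (1-s) - Real.log (1/2)) ≤ 0 := by
      apply mul_nonpos_of_nonneg_of_nonpos (by positivity)
      linarith
    linarith
  -- boundedness
  have hbdd : ∀ x ∈ Set.Ioo (0:ℝ) 1, -(c⁻¹/2) ≤ L x ∧ L x ≤ 0 := by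
    intro x hx
    rcases le_total x (1/2) with hx2 | hx2
    · have hLx : L x = -∫ s in x..(1/2:ℝ), Gg s := by
        rw [hL x, intervalIntegral.integral_symm]
      have hptw : ∀ s ∈ Set.Icc x (1/2:ℝ), s ∈ Set.Ioo (0:ℝ) 1 := fun s hs =>
        ⟨lt_of_lt_of_le hx.1 hs.1, lt_of_le_of_lt hs.2 (by norm_num)⟩
      have hnn : 0 ≤ ∫ s in x..(1/2:ℝ), Gg s :=
        intervalIntegral.integral_nonneg hx2 (fun s hs => hGgnonneg s (hptw s hs) hs.2)
      have hintlog : IntervalIntegrable (fun s => c⁻¹ * (Real.log (1/2) - Real.log s))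
          volume x (1/2) :=
        ((  intervalIntegrable_const.sub
          (intervalIntegral.intervalIntegrable_log
            (Set.notMem_uIcc_of_lt hx.1 (by norm_num)))).const_mul _)
      have hup : ∫ s in x..(1/2:ℝ), Gg s ≤
          ∫ s in x..(1/2:ℝ), c⁻¹ * (Real.log (1/2) - Real.log s) := by
        apply intervalIntegral.integral_mono_on hx2 (hGgint x hx _ hhalf) hintlog
        intro s hs
        exact (key_left s (hptw s hs) hs.2).2
      rw [intervalIntegral.integral_const_mul] at hup
      have hle := stmt10_logint hx.1 hx2
      have hfin : ∫ s in x..(1/2:ℝ), Gg s ≤ c⁻¹ / 2 := by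
        calc ∫ s in x..(1/2:ℝ), Gg s
            ≤ c⁻¹ * ∫ s in x..(1/2:ℝ), (Real.log (1/2) - Real.log s) := hup
          _ ≤ c⁻¹ * (1/2) := mul_le_mul_of_nonneg_left hle (by positivity)
          _ = c⁻¹ / 2 := by ring
      constructor
      · rw [hLx]; linarith
      · rw [hLx]; linarith
    · have hptw : ∀ s ∈ Set.Icc (1/2:ℝ) x, s ∈ Set.Ioo (0:ℝ) 1 := fun s hs =>
        ⟨lt_of_lt_of_le (by norm_num) hs.1, lt_of_le_of_lt hs.2 hx.2⟩
      have hnp : ∫ s in (1/2:ℝ)..x, Gg s ≤ 0 := by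
        have h := intervalIntegral.integral_nonneg (μ := volume) (f := fun s => -Gg s) hx2
          (fun s hs => neg_nonneg.mpr (hGgnonpos s (hptw s hs) hs.1))
        rw [intervalIntegral.integral_neg] at h
        linarith
      have h1x : (0:ℝ) < 1 - x := by linarith [hx.2]
      have hintlog : IntervalIntegrable (fun s => c⁻¹ * (Real.log (1-s) - Real.log (1/2)))
          volume (1/2) x := by
        apply IntervalIntegrable.const_mul
        apply IntervalIntegrable.sub _ intervalIntegrable_const
        apply IntervalIntegrable.log (continuousOn_const.sub continuousOn_id)
        intro s hs
        rw [Set.uIcc_of_le hx2] at hs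
        exact (by linarith [hs.2] : (0:ℝ) < 1 - s).ne'
      have hlo : ∫ s in (1/2:ℝ)..x, c⁻¹ * (Real.log (1-s) - Real.log (1/2)) ≤
          ∫ s in (1/2:ℝ)..x, Gg s := by
        apply intervalIntegral.integral_mono_on hx2 hintlog (hGgint _ hhalf x hx)
        intro s hs
        exact (key_right s (hptw s hs) hs.1).2
      have hcomp : ∫ s in (1/2:ℝ)..x, (Real.log (1-s) - Real.log (1/2)) =
          -∫ u in (1-x)..(1/2:ℝ), (Real.log (1/2) - Real.log u) := by
        have hcs := intervalIntegral.integral_comp_sub_left (a := (1/2:ℝ)) (b := x)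
          (fun u => Real.log u - Real.log (1/2)) 1
        rw [hcs, show (1:ℝ) - 1/2 = 1/2 by norm_num, ← intervalIntegral.integral_neg]
        congr 1
        funext u
        ring
      have hle := stmt10_logint h1x (by linarith : 1 - x ≤ 1/2)
      rw [intervalIntegral.integral_const_mul, hcomp] at hlo
      have h2 : c⁻¹ * (-(1/2)) ≤ c⁻¹ * -∫ u in (1-x)..(1/2:ℝ), (Real.log (1/2) - Real.log u) :=
        mul_le_mul_of_nonneg_left (by linarith) (by positivity)
      constructor
      · rw [hL x]; linarith
      · rw [hL x]; exact hnp
  refine ⟨hconc, ⟨-(c⁻¹/2), 0, hbdd⟩, hderivL, hcd, fun x _ => trivial, hGganti.injOn, ?_⟩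
  intro y _
  set t := K * (|y| + 1) with htdef
  have ht : 0 < t := by positivity
  set x₀ := (1/2) * Real.exp (-t) with hx₀def
  have hx₀pos : 0 < x₀ := by positivity
  have hexp : Real.exp (-t) < 1 := by
    rw [← Real.exp_zero]
    exact Real.exp_lt_exp.mpr (by linarith)
  have hx₀half : x₀ < 1/2 := by
    rw [hx₀def]
    nlinarith [Real.exp_pos (-t)]
  have hx₀mem : x₀ ∈ Set.Ioo (0:ℝ) 1 := ⟨hx₀pos, by linarith⟩
  have hlogx₀ : Real.log x₀ = Real.log (1/2) - t := by
    rw [hx₀def, Real.log_mul (by norm_num) (Real.exp_ne_zero _), Real.log_exp]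
    ring
  have hGgx₀ : |y| + 1 ≤ Gg x₀ := by
    have h := (key_left x₀ hx₀mem (le_of_lt hx₀half)).1
    rw [hlogx₀, sub_sub_cancel, htdef, inv_mul_cancel_left₀ hK.ne'] at h
    exact h
  have hx₁mem : 1 - x₀ ∈ Set.Ioo (0:ℝ) 1 := ⟨by linarith, by linarith⟩
  have hGgx₁ : Gg (1-x₀) ≤ -(|y| + 1) := by
    have h := (key_right (1-x₀) hx₁mem (by linarith)).1
    rw [show (1:ℝ) - (1-x₀) = x₀ by ring, hlogx₀, sub_sub_cancel_left, htdef,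
      mul_neg, inv_mul_cancel_left₀ hK.ne'] at h
    exact h
  have hsub : Set.Icc x₀ (1-x₀) ⊆ Set.Ioo (0:ℝ) 1 := fun s hs =>
    ⟨lt_of_lt_of_le hx₀pos hs.1, lt_of_le_of_lt hs.2 (by linarith)⟩
  have hy : y ∈ Set.Icc (Gg (1-x₀)) (Gg x₀) :=
    ⟨le_trans hGgx₁ (by linarith [neg_abs_le y]), le_trans (le_abs_self y) (by linarith)⟩
  obtain ⟨x, hxmem, hxy⟩ := intermediate_value_Icc' (by linarith : x₀ ≤ 1-x₀)
    (hGgcont.mono hsub) hy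
  exact ⟨x, hsub hxmem, hxy⟩
end

section
/- Let F : ℝ → ℝ be C² with ∂F/∂u a diffeomorphism onto (0,1), and suppose -∂²F/∂u²(u) = 2·∂F/∂u(u) + O((∂F/∂u(u))²) as u → +∞, and that F(u) - min(0,u) is bounded. Then the limit l := lim_{u→∞} (e^{2u} ∂F/∂u(u))^{-1} exists, is finite and nonzero, and -e^{2u} ∂²F/∂u²(u) → 2/l as u → +∞. -/
open Real Filter Set

/-- if `F` is C², `F'` a decreasing diffeomorphism onto `(0,1)`,
`-F'' = 2F' + O((F')²)` at `+∞` and `F - min(0,·)` is bounded, then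
`l = lim_{u→∞} (e^{2u} F'(u))⁻¹` exists, is finite and nonzero, and
`-e^{2u} F''(u) → 2/l`. -/
theorem stmt12 (F : ℝ → ℝ)
    (hF : ContDiff ℝ 2 F)
    (hrange : ∀ u, deriv F u ∈ Set.Ioo (0:ℝ) 1)
    (hanti : StrictAnti (deriv F))
    (hsurj : ∀ x ∈ Set.Ioo (0:ℝ) 1, ∃ u, deriv F u = x)
    (hasymp : ∃ C u₀ : ℝ, ∀ u ≥ u₀,
      |deriv (deriv F) u + 2 * deriv F u| ≤ C * (deriv F u)^2)
    (hbdd : ∃ M : ℝ, ∀ u, |F u - min 0 u| ≤ M) :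
    ∃ l : ℝ, l ≠ 0 ∧
      Filter.Tendsto (fun u => (Real.exp (2*u) * deriv F u)⁻¹) Filter.atTop (nhds l) ∧
      Filter.Tendsto (fun u => -(Real.exp (2*u) * deriv (deriv F) u))
        Filter.atTop (nhds (2/l)) := by
  obtain ⟨C, u₀, hC⟩ := hasymp
  set g : ℝ → ℝ := deriv F with hgdef
  have hg1 : ContDiff ℝ 1 g := by
    rw [show (2 : WithTop ℕ∞) = 1 + 1 by norm_num] at hF
    exact (contDiff_succ_iff_deriv.mp hF).2.2
  have hgdiff : Differentiable ℝ g := hg1.differentiable one_ne_zero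
  have hgpos : ∀ u, 0 < g u := fun u => (hrange u).1
  -- g tends to 0 at +infinity
  have hg0 : Tendsto g atTop (nhds 0) := by
    rw [tendsto_order]
    constructor
    · intro a ha
      exact Eventually.of_forall fun u => lt_trans ha (hgpos u)
    · intro a ha
      obtain ⟨u, hu⟩ := hsurj (min a 1 / 2)
        ⟨by positivity, by nlinarith [min_le_right a 1]⟩
      filter_upwards [eventually_ge_atTop (u + 1)] with v hv
      have h1 := hanti (show u < v by linarith)
      have hma : min a 1 / 2 < a := by nlinarith [min_le_left a 1]
      exact lt_trans (h1.trans_le hu.le) hma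
  -- the constant
  set C' : ℝ := max C 1 with hC'def
  have hC'pos : (0:ℝ) < C' := lt_of_lt_of_le one_pos (le_max_right _ _)
  have hCbound : ∀ u ≥ u₀, |deriv g u + 2 * g u| ≤ C' * (g u)^2 := fun u hu =>
    (hC u hu).trans (by nlinarith [sq_nonneg (g u), le_max_left C 1])
  -- h and its derivative
  set h : ℝ → ℝ := fun u => (Real.exp (2*u) * g u)⁻¹ with hhdef
  have hEnz : ∀ u, Real.exp (2*u) * g u ≠ 0 := fun u =>
    (mul_pos (exp_pos _) (hgpos u)).ne'
  have hhpos : ∀ u, 0 < h u := fun u => inv_pos.2 (mul_pos (exp_pos _) (hgpos u))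
  set D : ℝ → ℝ := fun u => -(2 * Real.exp (2*u) * g u + Real.exp (2*u) * deriv g u)
      / (Real.exp (2*u) * g u)^2 with hDdef
  have hhD : ∀ u, HasDerivAt h (D u) u := by
    intro u
    have he : HasDerivAt (fun u : ℝ => Real.exp (2*u)) (2 * Real.exp (2*u)) u := by
      have := ((hasDerivAt_id u).const_mul 2).exp
      simpa [mul_comm] using this
    have hE : HasDerivAt (fun u => Real.exp (2*u) * g u)
        (2 * Real.exp (2*u) * g u + Real.exp (2*u) * deriv g u) u := by
      simpa [mul_assoc] using he.fun_mul (hgdiff u).hasDerivAt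
    exact hE.inv (hEnz u)
  have hDsimp : ∀ u, D u = -((deriv g u + 2 * g u) / (Real.exp (2*u) * (g u)^2)) := by
    intro u
    rw [hDdef]
    have h1 : Real.exp (2*u) ≠ 0 := (exp_pos _).ne'
    have h2 : g u ≠ 0 := (hgpos u).ne'
    field_simp
    ring
  have hDbound : ∀ u ≥ u₀, |D u| ≤ C' * Real.exp (-(2*u)) := by
    intro u hu
    rw [hDsimp u, abs_neg, abs_div]
    have hpos : 0 < Real.exp (2*u) * (g u)^2 :=
      mul_pos (exp_pos _) (pow_pos (hgpos u) 2)
    rw [abs_of_pos hpos, div_le_iff₀ hpos]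
    calc |deriv g u + 2 * g u| ≤ C' * (g u)^2 := hCbound u hu
      _ = C' * Real.exp (-(2*u)) * (Real.exp (2*u) * (g u)^2) := by
          rw [Real.exp_neg]
          field_simp
  -- Φ is antitone, Ψ is monotone on [u₀, ∞)
  set Φ : ℝ → ℝ := fun u => h u + C'/2 * Real.exp (-(2*u)) with hΦdef
  set Ψ : ℝ → ℝ := fun u => h u - C'/2 * Real.exp (-(2*u)) with hΨdef
  have hexp' : ∀ u : ℝ, HasDerivAt (fun u : ℝ => C'/2 * Real.exp (-(2*u)))
      (-(C' * Real.exp (-(2*u)))) u := by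
    intro u
    have h0 : HasDerivAt (fun u : ℝ => -(2*u)) (-2) u := by
      simpa using ((hasDerivAt_id u).const_mul 2).fun_neg
    have := (h0.exp).const_mul (C'/2)
    refine this.congr_deriv ?_
    ring
  have hΦd : ∀ u, HasDerivAt Φ (D u - C' * Real.exp (-(2*u))) u := by
    intro u
    simpa [sub_eq_add_neg] using (hhD u).fun_add (hexp' u)
  have hΨd : ∀ u, HasDerivAt Ψ (D u + C' * Real.exp (-(2*u))) u := by
    intro u
    simpa [sub_neg_eq_add] using (hhD u).fun_sub (hexp' u)
  have hΦanti : AntitoneOn Φ (Set.Ici u₀) := by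
    apply antitoneOn_of_deriv_nonpos (convex_Ici u₀)
      (fun u _ => (hΦd u).continuousAt.continuousWithinAt)
      (fun u _ => ((hΦd u).differentiableAt).differentiableWithinAt)
    intro u hu
    rw [interior_Ici] at hu
    rw [(hΦd u).deriv]
    have := abs_le.mp (hDbound u (le_of_lt hu))
    linarith [this.2]
  have hΨmono : MonotoneOn Ψ (Set.Ici u₀) := by
    apply monotoneOn_of_deriv_nonneg (convex_Ici u₀)
      (fun u _ => (hΨd u).continuousAt.continuousWithinAt)
      (fun u _ => ((hΨd u).differentiableAt).differentiableWithinAt)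
    intro u hu
    rw [interior_Ici] at hu
    rw [(hΨd u).deriv]
    have := abs_le.mp (hDbound u (le_of_lt hu))
    linarith [this.1]
  -- limit of h
  set ψ : ℝ → ℝ := fun u => Φ (max u u₀) with hψdef
  have hψanti : Antitone ψ := fun u v huv =>
    hΦanti (le_max_right u u₀) (le_max_right v u₀) (max_le_max huv le_rfl)
  have hψbdd : BddBelow (Set.range ψ) := by
    refine ⟨0, ?_⟩
    rintro x ⟨u, rfl⟩
    have h1 := hhpos (max u u₀)
    have h2 : (0:ℝ) < C'/2 * Real.exp (-(2*(max u u₀))) := by positivity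
    simp only [hψdef, hΦdef]
    positivity
  set L : ℝ := ⨅ u, ψ u with hLdef
  have hψtend : Tendsto ψ atTop (nhds L) := tendsto_atTop_ciInf hψanti hψbdd
  have h2u : Tendsto (fun u : ℝ => -(2*u)) atTop atBot :=
    tendsto_neg_atTop_atBot.comp (tendsto_id.const_mul_atTop two_pos)
  have hcor : Tendsto (fun u : ℝ => C'/2 * Real.exp (-(2*u))) atTop (nhds 0) := by
    have := (Real.tendsto_exp_atBot.comp h2u).const_mul (C'/2)
    simpa using this
  have hhtend : Tendsto h atTop (nhds L) := by
    have hsub := hψtend.sub hcor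
    rw [sub_zero] at hsub
    apply hsub.congr'
    filter_upwards [eventually_ge_atTop u₀] with u hu
    simp only [hψdef, hΦdef, max_eq_left hu]
    ring
  -- positivity of L
  obtain ⟨u₁, hu₁lt, hu₁ge⟩ := ((hg0.eventually_lt_const
    (show (0:ℝ) < 1/C' by positivity)).and (eventually_ge_atTop u₀)).exists
  have hginv : C' < (g u₁)⁻¹ := by
    have := one_div_lt_one_div_of_lt (hgpos u₁) hu₁lt
    rwa [one_div_one_div, one_div] at this
  have hδpos : 0 < Ψ u₁ := by
    simp only [hΨdef, hhdef]
    rw [mul_inv, Real.exp_neg]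
    have hE : 0 < (Real.exp (2*u₁))⁻¹ := by positivity
    nlinarith
  have hlow : ∀ᶠ u in atTop, Ψ u₁ ≤ h u := by
    filter_upwards [eventually_ge_atTop u₁] with u hu
    have h1 : Ψ u₁ ≤ Ψ u := hΨmono hu₁ge (le_trans hu₁ge hu) hu
    have h2 : Ψ u ≤ h u := by
      simp only [hΨdef]
      nlinarith [Real.exp_pos (-(2*u)), hC'pos]
    exact le_trans h1 h2
  have hLpos : 0 < L := lt_of_lt_of_le hδpos (ge_of_tendsto hhtend hlow)
  refine ⟨L, hLpos.ne', hhtend, ?_⟩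
  -- second limit
  have hinv : Tendsto (fun u => (h u)⁻¹) atTop (nhds L⁻¹) := hhtend.inv₀ hLpos.ne'
  have hzero : Tendsto (fun u => Real.exp (2*u) * (deriv g u + 2 * g u)) atTop (nhds 0) := by
    apply squeeze_zero_norm' (a := fun u => C' * (h u)⁻¹ * g u)
    · filter_upwards [eventually_ge_atTop u₀] with u hu
      rw [Real.norm_eq_abs, abs_mul, abs_of_pos (exp_pos _), inv_inv]
      calc Real.exp (2*u) * |deriv g u + 2 * g u|
          ≤ Real.exp (2*u) * (C' * (g u)^2) :=
            mul_le_mul_of_nonneg_left (hCbound u hu) (exp_pos _).le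
        _ = C' * (Real.exp (2*u) * g u) * g u := by ring
    · have := (hinv.const_mul C').mul hg0
      simpa using this
  have hfinal := (hinv.const_mul 2).sub hzero
  rw [show (2:ℝ) * L⁻¹ - 0 = 2 / L by rw [sub_zero, div_eq_mul_inv]] at hfinal
  apply hfinal.congr
  intro u
  rw [inv_inv]
  ring
end

section
/- For every γ ∈ 𝒢 there exists a continuous, S¹-invariant, positive (1,1)-form ω on ℙ¹ with ∫_{ℙ¹} ω = 1 such that the associated symplectic-coordinate function satisfies γ_ω = γ. Concretely: there is a C² function F on ℝ with F - min(0,·) bounded, ∂F/∂u a diffeomorphism onto (0,1) with ∂F/∂u(-∞)=1, ∂F/∂u(+∞)=0, such that -∂²F/∂u²(G(x)) = γ(x) for all x ∈ (0,1) (G the inverse of ∂F/∂u), and such that u ↦ -e^{2u}∂²F/∂u²(u) and u ↦ -e^{-2u}∂²F/∂u²(u) extend continuously to +∞ and -∞ respectively with positive limits. -/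
open Set Filter MeasureTheory intervalIntegral Real Topology

def Adm (γ : ℝ → ℝ) (C : ℝ) : Prop :=
  ContinuousOn γ (Set.Icc 0 1) ∧ (∀ x ∈ Set.Ioo (0:ℝ) 1, 0 < γ x) ∧ 0 < C ∧
    ∀ x ∈ Set.Ioo (0:ℝ) 1, |γ x - 2 * min x (1-x)| ≤ C * (min x (1-x))^2

noncomputable def Gg (γ : ℝ → ℝ) (x : ℝ) : ℝ := -∫ t in (1/2:ℝ)..x, (γ t)⁻¹

section
variable {γ : ℝ → ℝ} {C : ℝ}

lemma adm_symm (hγ : Adm γ C) : Adm (fun t => γ (1 - t)) C := by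
  obtain ⟨h1, h2, h3, h4⟩ := hγ
  refine ⟨h1.comp (by fun_prop) ?_, fun x hx => h2 _ ?_, h3, fun x hx => ?_⟩
  · intro x hx; simp at hx ⊢; constructor <;> linarith [hx.1, hx.2]
  · simp at hx ⊢; constructor <;> linarith [hx.1, hx.2]
  · have h := h4 (1-x) (by simp at hx ⊢; constructor <;> linarith [hx.1, hx.2])
    have heq : min (1-x) (1-(1-x)) = min x (1-x) := by
      rw [min_comm]; ring_nf
    rw [heq] at h; convert h using 3 <;> ring_nf

lemma contAt_inv (hγ : Adm γ C) {x : ℝ} (hx : x ∈ Set.Ioo (0:ℝ) 1) :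
    ContinuousAt (fun t => (γ t)⁻¹) x := by
  have h : ContinuousAt γ x :=
    (hγ.1.mono Ioo_subset_Icc_self).continuousAt (Ioo_mem_nhds hx.1 hx.2)
  exact h.inv₀ (hγ.2.1 x hx).ne'

lemma intInt (hγ : Adm γ C) {a b : ℝ} (ha : a ∈ Set.Ioo (0:ℝ) 1) (hb : b ∈ Set.Ioo (0:ℝ) 1) :
    IntervalIntegrable (fun t => (γ t)⁻¹) volume a b := by
  have hsub : Set.uIcc a b ⊆ Set.Ioo (0:ℝ) 1 := Set.ordConnected_Ioo.uIcc_subset ha hb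
  exact (ContinuousOn.intervalIntegrable
    (fun x hx => ((contAt_inv hγ (hsub hx)).continuousWithinAt)))

lemma hasDerivAt_Gg (hγ : Adm γ C) {x : ℝ} (hx : x ∈ Set.Ioo (0:ℝ) 1) :
    HasDerivAt (Gg γ) (-(γ x)⁻¹) x := by
  have h := (intervalIntegral.integral_hasDerivAt_right
    (intInt hγ (show (1/2:ℝ) ∈ Set.Ioo (0:ℝ) 1 by norm_num) hx)
    (ContinuousAt.stronglyMeasurableAtFilter isOpen_Ioo
      (fun y hy => contAt_inv hγ hy) x hx)
    (contAt_inv hγ hx)).neg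
  exact h

lemma Gg_anti (hγ : Adm γ C) : StrictAntiOn (Gg γ) (Set.Ioo 0 1) := by
  refine strictAntiOn_of_deriv_neg (convex_Ioo 0 1)
    (fun x hx => (hasDerivAt_Gg hγ hx).continuousAt.continuousWithinAt) (fun x hx => ?_)
  rw [interior_Ioo] at hx
  rw [(hasDerivAt_Gg hγ hx).deriv]
  have : (0:ℝ) < (γ x)⁻¹ := inv_pos.2 (hγ.2.1 x hx)
  linarith

lemma Gg_symm (γ : ℝ → ℝ) (y : ℝ) : Gg (fun t => γ (1 - t)) y = -(Gg γ (1 - y)) := by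
  unfold Gg
  rw [intervalIntegral.integral_comp_sub_left (fun s => (γ s)⁻¹) 1]
  rw [show (1:ℝ) - 1/2 = 1/2 by norm_num, neg_neg,
    intervalIntegral.integral_symm (1-y) (1/2)]

lemma exists_x0 (hγ : Adm γ C) : ∃ x₀ : ℝ, 0 < x₀ ∧ x₀ ≤ 1/2 ∧
    ∀ t, 0 < t → t ≤ x₀ → t ≤ γ t ∧ γ t ≤ 3*t ∧ |(γ t)⁻¹ - (2*t)⁻¹| ≤ C/2 := by
  obtain ⟨h1, h2, hC, h4⟩ := hγ
  refine ⟨min (1/2) (1/C), by positivity, min_le_left _ _, fun t ht htle => ?_⟩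
  have ht2 : t ≤ 1/2 := htle.trans (min_le_left _ _)
  have htC : C * t ≤ 1 := by
    have := htle.trans (min_le_right _ _)
    rw [div_eq_mul_inv, one_mul] at this
    calc C * t ≤ C * C⁻¹ := by nlinarith
    _ = 1 := mul_inv_cancel₀ hC.ne'
  have hmem : t ∈ Set.Ioo (0:ℝ) 1 := ⟨ht, by linarith⟩
  have hmin : min t (1-t) = t := min_eq_left (by linarith)
  have hb := h4 t hmem; rw [hmin] at hb
  have habs := abs_le.1 hb
  have hCt2 : C * t^2 ≤ t := by nlinarith
  have hlow : t ≤ γ t := by nlinarith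
  have hup : γ t ≤ 3*t := by nlinarith
  refine ⟨hlow, hup, ?_⟩
  have hγt : (0:ℝ) < γ t := h2 t hmem
  rw [inv_sub_inv hγt.ne' (by positivity : (2*t) ≠ 0), abs_div,
    abs_of_pos (by positivity : (0:ℝ) < γ t * (2*t)), div_le_iff₀ (by positivity)]
  rw [abs_sub_comm]
  calc |γ t - 2 * t| ≤ C * t^2 := hb
    _ ≤ C/2 * (γ t * (2*t)) := by nlinarith

lemma Gg_eq (hγ : Adm γ C) {x₀ x : ℝ} (h0 : 0 < x₀) (h0' : x₀ ≤ 1/2)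
    (hx : 0 < x) (hx' : x ≤ x₀) :
    Gg γ x = (∫ t in x..x₀, (γ t)⁻¹) + Gg γ x₀ := by
  have hx₀ : x₀ ∈ Set.Ioo (0:ℝ) 1 := ⟨h0, by linarith⟩
  have hxm : x ∈ Set.Ioo (0:ℝ) 1 := ⟨hx, by linarith⟩
  have hh : (1/2:ℝ) ∈ Set.Ioo (0:ℝ) 1 := by norm_num
  have hadd := intervalIntegral.integral_add_adjacent_intervals
    (intInt hγ hxm hx₀) (intInt hγ hx₀ hh)
  unfold Gg
  rw [intervalIntegral.integral_symm x (1/2), intervalIntegral.integral_symm x₀ (1/2), neg_neg, neg_neg, ← hadd]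
lemma intInt_two (hx : (0:ℝ) < x) (hx0 : x ≤ x₀) :
    IntervalIntegrable (fun t : ℝ => (2*t)⁻¹) volume x x₀ := by
  apply ContinuousOn.intervalIntegrable
  apply ContinuousOn.inv₀ (by fun_prop)
  intro t ht
  rw [Set.uIcc_of_le hx0] at ht
  have h := ht.1; nlinarith

lemma integral_two_inv (hx : (0:ℝ) < x) (hx0 : x ≤ x₀) :
    ∫ t in x..x₀, (2*t)⁻¹ = (1/2) * Real.log (x₀/x) := by
  have h : ∀ t : ℝ, (2*t)⁻¹ = (1/2) * t⁻¹ := fun t => by rw [mul_inv]; ring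
  simp_rw [h]
  rw [intervalIntegral.integral_const_mul, integral_inv_of_pos hx (by linarith)]

lemma Gg_tendsto_atTop (hγ : Adm γ C) : Tendsto (Gg γ) (𝓝[>] (0:ℝ)) atTop := by
  obtain ⟨x₀, h0, h0', hx0⟩ := exists_x0 hγ
  have hlb : ∀ x ∈ Set.Ioc (0:ℝ) x₀, (1/3) * Real.log (x₀/x) + Gg γ x₀ ≤ Gg γ x := by
    rintro x ⟨hx, hx'⟩
    rw [Gg_eq hγ h0 h0' hx hx']
    have hmono : ∫ t in x..x₀, (3*t)⁻¹ ≤ ∫ t in x..x₀, (γ t)⁻¹ := by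
      apply intervalIntegral.integral_mono_on hx'
      · apply ContinuousOn.intervalIntegrable
        apply ContinuousOn.inv₀ (by fun_prop)
        intro t ht
        rw [Set.uIcc_of_le hx'] at ht
        have h := ht.1; nlinarith
      · exact intInt hγ ⟨hx, by linarith⟩ ⟨h0, by linarith⟩
      · intro t ht
        have h1 := (hx0 t (lt_of_lt_of_le hx ht.1) ht.2).1
        have h2 := (hx0 t (lt_of_lt_of_le hx ht.1) ht.2).2.1
        have hγt : 0 < γ t := lt_of_lt_of_le (lt_of_lt_of_le hx ht.1) h1
        apply inv_anti₀ hγt h2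
    have h3 : ∫ t in x..x₀, (3*t)⁻¹ = (1/3) * Real.log (x₀/x) := by
      have h : ∀ t : ℝ, (3*t)⁻¹ = (1/3) * t⁻¹ := fun t => by rw [mul_inv]; ring
      simp_rw [h]
      rw [intervalIntegral.integral_const_mul, integral_inv_of_pos hx (by linarith)]
    linarith [hmono, h3.ge, h3.le]
  have h1 : Tendsto (fun x : ℝ => (1/3) * Real.log (x₀/x) + Gg γ x₀) (𝓝[>] (0:ℝ)) atTop := by
    apply tendsto_atTop_add_const_right
    apply Tendsto.const_mul_atTop (by norm_num : (0:ℝ) < 1/3)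
    exact Real.tendsto_log_atTop.comp ((tendsto_inv_nhdsGT_zero).const_mul_atTop h0 |>.congr
      (fun x => by rw [div_eq_mul_inv]))
  exact tendsto_atTop_mono' _ (by filter_upwards [Ioc_mem_nhdsGT h0] using hlb) h1
lemma Gg_upper (hγ : Adm γ C) {x₀ x : ℝ} (h0 : 0 < x₀) (h0' : x₀ ≤ 1/2)
    (hx0 : ∀ t, 0 < t → t ≤ x₀ → t ≤ γ t ∧ γ t ≤ 3*t ∧ |(γ t)⁻¹ - (2*t)⁻¹| ≤ C/2)
    (hx : 0 < x) (hx' : x ≤ x₀) :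
    Gg γ x ≤ (1/2) * Real.log (x₀/x) + C/2 * x₀ + Gg γ x₀ := by
  rw [Gg_eq hγ h0 h0' hx hx']
  have hmono : ∫ t in x..x₀, (γ t)⁻¹ ≤ ∫ t in x..x₀, ((2*t)⁻¹ + C/2) := by
    apply intervalIntegral.integral_mono_on hx'
    · exact intInt hγ ⟨hx, by linarith⟩ ⟨h0, by linarith⟩
    · exact (intInt_two hx hx').add intervalIntegrable_const
    · intro t ht
      have h3 := (hx0 t (lt_of_lt_of_le hx ht.1) ht.2).2.2
      have := (abs_le.1 h3).2
      linarith
  have hcalc : ∫ t in x..x₀, ((2*t)⁻¹ + C/2) = (1/2) * Real.log (x₀/x) + C/2 * (x₀ - x) := by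
    rw [intervalIntegral.integral_add (intInt_two hx hx') intervalIntegrable_const,
      integral_two_inv hx hx', intervalIntegral.integral_const, smul_eq_mul]
    ring
  have hC : 0 < C := hγ.2.2.1
  nlinarith [hmono, hcalc.le, hcalc.ge]

lemma Gg_le_bound (hγ : Adm γ C) :
    ∃ A > (0:ℝ), ∀ x ∈ Set.Ioo (0:ℝ) 1, x ≤ A * Real.exp (-(2 * Gg γ x)) := by
  obtain ⟨x₀, h0, h0', hx0⟩ := exists_x0 hγ
  have hx₀m : x₀ ∈ Set.Ioo (0:ℝ) 1 := ⟨h0, by linarith⟩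
  set K := Gg γ x₀ with hK
  refine ⟨max (x₀ * Real.exp (C*x₀ + 2*K)) (Real.exp (2*K)), lt_max_iff.2 (Or.inr (Real.exp_pos _)), fun x hx => ?_⟩
  rcases le_or_gt x x₀ with hle | hlt
  · have hub := Gg_upper hγ h0 h0' hx0 hx.1 hle
    have h2 : -(2 * Gg γ x) ≥ -(Real.log (x₀/x) + C*x₀ + 2*K) := by linarith
    have h3 : Real.exp (-(2 * Gg γ x)) ≥ Real.exp (-(Real.log (x₀/x) + C*x₀ + 2*K)) :=
      Real.exp_le_exp.2 h2
    have h4 : Real.exp (-(Real.log (x₀/x) + C*x₀ + 2*K))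
        = (x/x₀) * Real.exp (-(C*x₀ + 2*K)) := by
      rw [show -(Real.log (x₀/x) + C*x₀ + 2*K) = -Real.log (x₀/x) + -(C*x₀ + 2*K) by ring,
        Real.exp_add, Real.exp_neg, Real.exp_log (div_pos h0 hx.1)]
      rw [inv_div]
    calc x = x₀ * Real.exp (C*x₀ + 2*K) * ((x/x₀) * Real.exp (-(C*x₀ + 2*K))) := by
          rw [show x₀ * Real.exp (C*x₀ + 2*K) * ((x/x₀) * Real.exp (-(C*x₀ + 2*K)))
            = x * (x₀/x₀) * (Real.exp (C*x₀ + 2*K) * Real.exp (-(C*x₀ + 2*K))) by ring,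
            div_self h0.ne', ← Real.exp_add,
            show C*x₀ + 2*K + (-(C*x₀ + 2*K)) = 0 by ring, Real.exp_zero, mul_one, mul_one]
      _ ≤ x₀ * Real.exp (C*x₀ + 2*K) * Real.exp (-(2 * Gg γ x)) := by
          apply mul_le_mul_of_nonneg_left (h4 ▸ h3) (by positivity)
      _ ≤ _ := by
          apply mul_le_mul_of_nonneg_right (le_max_left _ _) (Real.exp_nonneg _)
  · have hanti : Gg γ x < K := Gg_anti hγ hx₀m hx hlt
    have h3 : Real.exp (-(2 * Gg γ x)) ≥ Real.exp (-(2*K)) :=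
      Real.exp_le_exp.2 (by linarith)
    calc x ≤ 1 := hx.2.le
      _ = Real.exp (2*K) * Real.exp (-(2*K)) := by rw [← Real.exp_add]; simp
      _ ≤ Real.exp (2*K) * Real.exp (-(2 * Gg γ x)) :=
          mul_le_mul_of_nonneg_left h3 (Real.exp_nonneg _)
      _ ≤ _ := mul_le_mul_of_nonneg_right (le_max_right _ _) (Real.exp_nonneg _)
lemma Gg_limit (hγ : Adm γ C) :
    ∃ a > (0:ℝ), Tendsto (fun x => γ x * Real.exp (2 * Gg γ x)) (𝓝[>] (0:ℝ)) (𝓝 a) := by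
  obtain ⟨x₀, h0, h0', hx0⟩ := exists_x0 hγ
  have hC : 0 < C := hγ.2.2.1
  set r : ℝ → ℝ := fun t => (γ t)⁻¹ - (2*t)⁻¹ with hr
  set K := Gg γ x₀ with hKdef
  have hrcont : ContinuousOn r (Set.Ioc 0 x₀) := by
    intro t ht
    have h1 : ContinuousAt (fun s => (γ s)⁻¹) t := contAt_inv hγ ⟨ht.1, by linarith [ht.2]⟩
    have h2 : ContinuousAt (fun s : ℝ => (2*s)⁻¹) t :=
      ((continuous_const.mul continuous_id).continuousAt).inv₀ (by have := ht.1; show (2:ℝ) * t ≠ 0; positivity)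
    exact (h1.sub h2).continuousWithinAt
  have hrbound : ∀ t ∈ Set.Ioc (0:ℝ) x₀, ‖r t‖ ≤ C/2 := fun t ht =>
    (hx0 t ht.1 ht.2).2.2
  have hrint : IntegrableOn r (Set.Ioc 0 x₀) volume := by
    apply Integrable.mono' (g := fun _ => C/2)
    · exact integrableOn_const measure_Ioc_lt_top.ne
    · exact hrcont.aestronglyMeasurable measurableSet_Ioc
    · exact (ae_restrict_iff' measurableSet_Ioc).2 (Filter.Eventually.of_forall hrbound)
  set R₀ := ∫ t in Set.Ioc (0:ℝ) x₀, r t with hR0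
  have hRdiff : ∀ x ∈ Set.Ioc (0:ℝ) x₀, ‖(∫ t in x..x₀, r t) - R₀‖ ≤ C/2 * x := by
    rintro x ⟨hx, hx'⟩
    rw [intervalIntegral.integral_of_le hx']
    have hsplit : R₀ = (∫ t in Set.Ioc (0:ℝ) x, r t) + ∫ t in Set.Ioc x x₀, r t := by
      rw [hR0, ← Set.Ioc_union_Ioc_eq_Ioc hx.le hx',
        setIntegral_union (Set.Ioc_disjoint_Ioc_of_le le_rfl) measurableSet_Ioc
          (hrint.mono_set (Set.Ioc_subset_Ioc_right hx')) (hrint.mono_set (Set.Ioc_subset_Ioc_left hx.le))]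
    rw [hsplit]
    have hb : ‖∫ t in Set.Ioc (0:ℝ) x, r t‖ ≤ C/2 * (volume (Set.Ioc (0:ℝ) x)).toReal := by
      apply norm_setIntegral_le_of_norm_le_const measure_Ioc_lt_top
      · exact fun t ht => hrbound t ⟨ht.1, ht.2.trans hx'⟩
    have hv : (volume (Set.Ioc (0:ℝ) x)).toReal = x := by
      rw [Real.volume_Ioc, ENNReal.toReal_ofReal (by linarith)]; ring
    rw [hv] at hb
    calc ‖(∫ t in Set.Ioc x x₀, r t) - ((∫ t in Set.Ioc (0:ℝ) x, r t) + ∫ t in Set.Ioc x x₀, r t)‖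
        = ‖∫ t in Set.Ioc (0:ℝ) x, r t‖ := by rw [show (∫ t in Set.Ioc x x₀, r t) - ((∫ t in Set.Ioc (0:ℝ) x, r t) + ∫ t in Set.Ioc x x₀, r t) = -(∫ t in Set.Ioc (0:ℝ) x, r t) by ring, norm_neg]
      _ ≤ C/2 * x := hb
  have hRtend : Tendsto (fun x => ∫ t in x..x₀, r t) (𝓝[>] (0:ℝ)) (𝓝 R₀) := by
    have hz : Tendsto (fun x : ℝ => (∫ t in x..x₀, r t) - R₀) (𝓝[>] (0:ℝ)) (𝓝 0) := by
      apply squeeze_zero_norm' (a := fun x => C/2 * x)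
      · filter_upwards [Ioc_mem_nhdsGT h0] using hRdiff
      · have : Tendsto (fun x : ℝ => C/2 * x) (𝓝 (0:ℝ)) (𝓝 (C/2 * 0)) :=
          (continuous_const.mul continuous_id).tendsto 0
        simpa using this.mono_left nhdsWithin_le_nhds
    have := hz.add_const R₀
    simpa using this
  have hfrac : Tendsto (fun x => γ x / x) (𝓝[>] (0:ℝ)) (𝓝 2) := by
    have hz : Tendsto (fun x : ℝ => γ x / x - 2) (𝓝[>] (0:ℝ)) (𝓝 0) := by
      apply squeeze_zero_norm' (a := fun x => C * x)
      · filter_upwards [Ioc_mem_nhdsGT h0]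
        rintro x ⟨hx, hx'⟩
        have hmem : x ∈ Set.Ioo (0:ℝ) 1 := ⟨hx, by linarith⟩
        have hmin : min x (1-x) = x := min_eq_left (by linarith)
        have hb := hγ.2.2.2 x hmem; rw [hmin] at hb
        have : γ x / x - 2 = (γ x - 2*x)/x := by field_simp
        rw [Real.norm_eq_abs, this, abs_div, abs_of_pos hx, div_le_iff₀ hx]
        calc |γ x - 2*x| ≤ C * x^2 := by
              calc |γ x - 2*x| = |γ x - 2 * x| := rfl
              _ ≤ C * x^2 := hb
          _ = C * x * x := by ring
      · have : Tendsto (fun x : ℝ => C * x) (𝓝 (0:ℝ)) (𝓝 (C * 0)) :=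
          (continuous_const.mul continuous_id).tendsto 0
        simpa using this.mono_left nhdsWithin_le_nhds
    have := hz.add_const 2
    simpa using this
  have hdecomp : ∀ x ∈ Set.Ioc (0:ℝ) x₀,
      γ x * Real.exp (2 * Gg γ x)
        = (γ x / x) * (x₀ * Real.exp (2*(∫ t in x..x₀, r t) + 2*K)) := by
    rintro x ⟨hx, hx'⟩
    have hsplit : ∫ t in x..x₀, (γ t)⁻¹ = (∫ t in x..x₀, (2*t)⁻¹) + ∫ t in x..x₀, r t := by
      rw [← intervalIntegral.integral_add (intInt_two hx hx')
        ((intInt hγ ⟨hx, by linarith⟩ ⟨h0, by linarith⟩).sub (intInt_two hx hx'))]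
      congr 1
      funext t; ring
    have hG : Gg γ x = (1/2) * Real.log (x₀/x) + (∫ t in x..x₀, r t) + K := by
      rw [Gg_eq hγ h0 h0' hx hx', hsplit, integral_two_inv hx hx']
    rw [hG, show 2 * ((1/2) * Real.log (x₀/x) + (∫ t in x..x₀, r t) + K)
      = Real.log (x₀/x) + (2*(∫ t in x..x₀, r t) + 2*K) by ring,
      Real.exp_add, Real.exp_log (div_pos h0 hx)]
    field_simp
  refine ⟨2 * (x₀ * Real.exp (2*R₀ + 2*K)), by positivity, ?_⟩
  have htend2 : Tendsto (fun x => x₀ * Real.exp (2*(∫ t in x..x₀, r t) + 2*K))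
      (𝓝[>] (0:ℝ)) (𝓝 (x₀ * Real.exp (2*R₀ + 2*K))) := by
    apply Tendsto.const_mul
    exact (Real.continuous_exp.tendsto _).comp ((hRtend.const_mul 2).add_const (2*K))
  have := hfrac.mul htend2
  apply this.congr'
  filter_upwards [Ioc_mem_nhdsGT h0] with x hx
  exact (hdecomp x hx).symm
lemma Gg_tendsto_atBot (hγ : Adm γ C) : Tendsto (Gg γ) (𝓝[<] (1:ℝ)) atBot := by
  have h1 := Gg_tendsto_atTop (adm_symm hγ)
  have hmap : Tendsto (fun x : ℝ => 1 - x) (𝓝[<] (1:ℝ)) (𝓝[>] (0:ℝ)) := by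
    rw [tendsto_nhdsWithin_iff]
    constructor
    · have h2 : Tendsto (fun x : ℝ => 1 - x) (𝓝 1) (𝓝 (1-1)) :=
        (continuous_const.sub continuous_id).tendsto 1
      simpa using h2.mono_left nhdsWithin_le_nhds
    · filter_upwards [self_mem_nhdsWithin] with x hx
      have hx' : x < 1 := hx
      exact sub_pos.2 hx'
  have h3 := h1.comp hmap
  rw [← tendsto_neg_atTop_iff]
  apply h3.congr
  intro x
  simp only [Function.comp_apply, Gg_symm γ (1 - x)]
  norm_num

lemma Gg_surj (hγ : Adm γ C) (u : ℝ) : ∃ x ∈ Set.Ioo (0:ℝ) 1, Gg γ x = u := by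
  have h1 : ∀ᶠ x in 𝓝[>] (0:ℝ), Gg γ x > u ∧ x ∈ Set.Ioo (0:ℝ) 1 :=
    ((Gg_tendsto_atTop hγ).eventually (eventually_gt_atTop u)).and
      (Ioo_mem_nhdsGT one_pos)
  have h2 : ∀ᶠ x in 𝓝[<] (1:ℝ), Gg γ x < u ∧ x ∈ Set.Ioo (0:ℝ) 1 :=
    ((Gg_tendsto_atBot hγ).eventually (eventually_lt_atBot u)).and
      (Ioo_mem_nhdsLT one_pos)
  obtain ⟨x₁, hx₁u, hx₁⟩ := h1.exists
  obtain ⟨x₂, hx₂u, hx₂⟩ := h2.exists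
  have hlt : x₁ < x₂ := by
    by_contra h
    push_neg at h
    rcases eq_or_lt_of_le h with heq | hlt'
    · rw [heq] at hx₂u; linarith
    · have := Gg_anti hγ hx₂ hx₁ hlt'
      linarith
  have hc : ContinuousOn (Gg γ) (Set.Icc x₁ x₂) := by
    intro t ht
    have htm : t ∈ Set.Ioo (0:ℝ) 1 :=
      ⟨lt_of_lt_of_le hx₁.1 ht.1, lt_of_le_of_lt ht.2 hx₂.2⟩
    exact (hasDerivAt_Gg hγ htm).continuousAt.continuousWithinAt
  have := intermediate_value_Icc' hlt.le hc
    (show u ∈ Set.Icc (Gg γ x₂) (Gg γ x₁) from ⟨hx₂u.le, hx₁u.le⟩)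
  obtain ⟨x, hxm, hxu⟩ := this
  exact ⟨x, ⟨lt_of_lt_of_le hx₁.1 hxm.1, lt_of_le_of_lt hxm.2 hx₂.2⟩, hxu⟩
lemma exists_inverse (hγ : Adm γ C) : ∃ f : ℝ → ℝ,
    (∀ u, f u ∈ Set.Ioo (0:ℝ) 1) ∧ (∀ u, Gg γ (f u) = u) ∧
    (∀ x ∈ Set.Ioo (0:ℝ) 1, f (Gg γ x) = x) ∧ Continuous f ∧
    (∀ u, HasDerivAt f (-(γ (f u))) u) := by
  have hsurj := Gg_surj hγ
  choose f hf1 hf2 using hsurj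
  have inj := (Gg_anti hγ).injOn
  have hGf : ∀ x ∈ Set.Ioo (0:ℝ) 1, f (Gg γ x) = x :=
    fun x hx => inj (hf1 _) hx (hf2 _)
  have hanti : StrictAnti f := by
    intro u v huv
    by_contra h
    push_neg at h
    rcases eq_or_lt_of_le h with heq | hlt
    · have : u = v := by rw [← hf2 u, ← hf2 v, heq]
      linarith
    · have := Gg_anti hγ (hf1 u) (hf1 v) hlt
      rw [hf2 u, hf2 v] at this
      linarith
  have hrange : Set.range f = Set.Ioo (0:ℝ) 1 := by
    apply Set.Subset.antisymm
    · rintro y ⟨u, rfl⟩; exact hf1 u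
    · intro x hx
      exact ⟨Gg γ x, hGf x hx⟩
  have hcontf : Continuous f := by
    rw [continuous_iff_continuousAt]
    intro a
    have hm : MonotoneOn (fun u => f (-u)) Set.univ := fun u _ v _ huv =>
      hanti.antitone (neg_le_neg huv)
    have hcm : ∀ b : ℝ, ContinuousAt (fun u => f (-u)) b := by
      intro b
      apply continuousAt_of_monotoneOn_of_image_mem_nhds hm univ_mem
      rw [Set.image_univ]
      have : Set.range (fun u => f (-u)) = Set.Ioo (0:ℝ) 1 := by
        rw [show (fun u => f (-u)) = f ∘ (fun u : ℝ => -u) from rfl, Set.range_comp]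
        simp only [neg_surjective.range_eq, Set.image_univ]
        exact hrange
      rw [this]
      exact isOpen_Ioo.mem_nhds (hf1 _)
    have hfe : f = (fun u => f (-u)) ∘ (fun u : ℝ => -u) := funext fun u => by simp
    rw [hfe]
    exact (hcm (-a)).comp continuous_neg.continuousAt
  refine ⟨f, hf1, hf2, hGf, hcontf, fun u => ?_⟩
  have hne : (-(γ (f u))⁻¹) ≠ 0 := by
    have := hγ.2.1 _ (hf1 u)
    simp only [ne_eq, neg_eq_zero, inv_eq_zero]
    linarith
  have hd := HasDerivAt.of_local_left_inverse (hcontf.continuousAt)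
    (hasDerivAt_Gg hγ (hf1 u)) hne (Filter.Eventually.of_forall hf2)
  rw [← inv_neg, inv_inv] at hd
  exact hd
lemma neg_two_mul_tendsto : Tendsto (fun u : ℝ => -(2*u)) atTop atBot := by
  have h : Tendsto (fun u : ℝ => 2*u) atTop atTop :=
    tendsto_id.const_mul_atTop (by norm_num : (0:ℝ) < 2)
  exact tendsto_neg_atBot_iff.2 h

lemma exp_decay_tendsto (A : ℝ) :
    Tendsto (fun u : ℝ => A * Real.exp (-(2*u))) atTop (𝓝 0) := by
  have h1 : Tendsto (fun u : ℝ => Real.exp (-(2*u))) atTop (𝓝 0) :=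
    Real.tendsto_exp_atBot.comp neg_two_mul_tendsto
  simpa using h1.const_mul A

lemma exp_growth_tendsto (B : ℝ) :
    Tendsto (fun u : ℝ => B * Real.exp (2*u)) atBot (𝓝 0) := by
  have h0 : Tendsto (fun u : ℝ => 2*u) atBot atBot := by
    have h : Tendsto (fun u : ℝ => 2*u) atBot atBot := by
      apply Tendsto.const_mul_atBot (by norm_num : (0:ℝ) < 2) tendsto_id
    exact h
  have h1 : Tendsto (fun u : ℝ => Real.exp (2*u)) atBot (𝓝 0) :=
    Real.tendsto_exp_atBot.comp h0
  simpa using h1.const_mul B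

end

/-- for every `γ ∈ 𝒢` there is a potential `F` (of a continuous,
invariant, normalized positive (1,1)-form on ℙ¹) with `F - min(0,·)` bounded,
`F'` a diffeomorphism onto `(0,1)` with limits `1` at `-∞` and `0` at `+∞`,
inverse `G`, realizing `γ` via `-F''(G x) = γ x`; moreover `-e^{2u}F''(u)` and
`-e^{-2u}F''(u)` have positive limits at `+∞` and `-∞` respectively (so the form
extends continuously to ℙ¹). -/
theorem stmt13 (γ : ℝ → ℝ)
    (hcont : ContinuousOn γ (Set.Icc 0 1))
    (hpos : ∀ x ∈ Set.Ioo (0:ℝ) 1, 0 < γ x)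
    (hO : ∃ C > (0:ℝ), ∀ x ∈ Set.Ioo (0:ℝ) 1,
      |γ x - 2 * min x (1-x)| ≤ C * (min x (1-x))^2) :
    ∃ F G : ℝ → ℝ,
      ContDiff ℝ 2 F ∧
      (∃ M : ℝ, ∀ u, |F u - min 0 u| ≤ M) ∧
      (∀ u, deriv F u ∈ Set.Ioo (0:ℝ) 1) ∧
      Filter.Tendsto (deriv F) Filter.atBot (nhds 1) ∧
      Filter.Tendsto (deriv F) Filter.atTop (nhds 0) ∧
      (∀ x ∈ Set.Ioo (0:ℝ) 1, deriv F (G x) = x) ∧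
      (∀ u, G (deriv F u) = u) ∧
      (∀ x ∈ Set.Ioo (0:ℝ) 1, -(deriv (deriv F) (G x)) = γ x) ∧
      (∃ a > (0:ℝ), Filter.Tendsto (fun u => -(Real.exp (2*u) * deriv (deriv F) u))
        Filter.atTop (nhds a)) ∧
      (∃ b > (0:ℝ), Filter.Tendsto (fun u => -(Real.exp (-(2*u)) * deriv (deriv F) u))
        Filter.atBot (nhds b)) := by
  obtain ⟨C, hC, hOb⟩ := hO
  have hγ : Adm γ C := ⟨hcont, hpos, hC, hOb⟩
  obtain ⟨f, hf1, hf2, hGf, hcontf, hderiv⟩ := exists_inverse hγ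
  set F : ℝ → ℝ := fun u => ∫ t in (0:ℝ)..u, f t with hFdef
  have hFderiv : ∀ u, HasDerivAt F (f u) u := fun u =>
    intervalIntegral.integral_hasDerivAt_right (hcontf.intervalIntegrable _ _)
      (hcontf.stronglyMeasurableAtFilter _ _) hcontf.continuousAt
  have hF' : deriv F = f := funext fun u => (hFderiv u).deriv
  have hF'' : deriv (deriv F) = fun u => -(γ (f u)) := by
    rw [hF']; exact funext fun u => (hderiv u).deriv
  obtain ⟨A, hA, hAb⟩ := Gg_le_bound hγ
  have hfA : ∀ u, f u ≤ A * Real.exp (-(2*u)) := fun u => by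
    have h := hAb (f u) (hf1 u); rwa [hf2 u] at h
  obtain ⟨B, hB, hBb⟩ := Gg_le_bound (adm_symm hγ)
  have hfB : ∀ u, 1 - f u ≤ B * Real.exp (2*u) := fun u => by
    have hmem : 1 - f u ∈ Set.Ioo (0:ℝ) 1 :=
      ⟨by linarith [(hf1 u).2], by linarith [(hf1 u).1]⟩
    have h := hBb (1 - f u) hmem
    rw [Gg_symm γ (1 - f u), show (1:ℝ) - (1 - f u) = f u by ring, hf2 u] at h
    simpa using h
  -- limits of f
  have hftop : Tendsto f atTop (𝓝 0) := by
    apply squeeze_zero_norm' (a := fun u => A * Real.exp (-(2*u)))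
    · filter_upwards with u
      rw [Real.norm_eq_abs, abs_of_pos (hf1 u).1]
      exact hfA u
    · exact exp_decay_tendsto A
  have hfbot : Tendsto f atBot (𝓝 1) := by
    have hz : Tendsto (fun u => f u - 1) atBot (𝓝 0) := by
      apply squeeze_zero_norm' (a := fun u => B * Real.exp (2*u))
      · filter_upwards with u
        rw [Real.norm_eq_abs, abs_of_neg (by linarith [(hf1 u).2] : f u - 1 < 0)]
        have := hfB u; linarith
      · exact exp_growth_tendsto B
    have := hz.add_const 1
    simpa using this
  -- smoothness
  have hγf_cont : Continuous (fun u => -(γ (f u))) :=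
    (hcont.comp_continuous hcontf (fun u => Set.Ioo_subset_Icc_self (hf1 u))).neg
  have hCD : ContDiff ℝ 2 F := by
    rw [show (2 : WithTop ℕ∞) = 1 + 1 by norm_num]
    refine contDiff_succ_iff_deriv.2 ⟨fun u => (hFderiv u).differentiableAt, by simp, ?_⟩
    rw [hF']
    refine contDiff_one_iff_deriv.2 ⟨fun u => (hderiv u).differentiableAt, ?_⟩
    rw [show deriv f = fun u => -(γ (f u)) from funext fun u => (hderiv u).deriv]
    exact hγf_cont
  -- boundedness of F - min 0 u
  have hFbound : ∀ u, |F u - min 0 u| ≤ A/2 + B/2 := by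
    intro u
    rcases le_or_gt 0 u with hu | hu
    · rw [min_eq_left (by linarith : (0:ℝ) ≤ u)] -- min 0 u = 0 when 0 ≤ u : min_eq_left needs 0 ≤ u
      have hup : F u ≤ A/2 := by
        have hmono : F u ≤ ∫ t in (0:ℝ)..u, A * Real.exp (-(2*t)) := by
          apply intervalIntegral.integral_mono_on hu (hcontf.intervalIntegrable _ _)
            (by apply Continuous.intervalIntegrable; fun_prop)
          intro t _; exact hfA t
        have hcalc : ∫ t in (0:ℝ)..u, A * Real.exp (-(2*t))
            = A/2 - A/2 * Real.exp (-(2*u)) := by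
          have hd : ∀ t ∈ Set.uIcc (0:ℝ) u, HasDerivAt (fun s => -(A/2) * Real.exp (-(2*s)))
              (A * Real.exp (-(2*t))) t := by
            intro t _
            have h1 : HasDerivAt (fun s : ℝ => -(2*s)) (-2) t := by
              simpa using (hasDerivAt_id t).const_mul (-2)
            have := (h1.exp).const_mul (-(A/2))
            refine this.congr_deriv ?_
            ring
          rw [intervalIntegral.integral_eq_sub_of_hasDerivAt hd
            (by apply Continuous.intervalIntegrable; fun_prop)]
          simp
          ring
        have hexp : 0 < Real.exp (-(2*u)) := Real.exp_pos _
        nlinarith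
      have hlow : 0 ≤ F u := by
        apply intervalIntegral.integral_nonneg hu
        intro t _; exact (hf1 t).1.le
      rw [abs_of_nonneg (by linarith)]
      linarith
    · rw [min_eq_right (by linarith : u ≤ (0:ℝ))]
      have hrepr : F u - u = ∫ t in u..(0:ℝ), (1 - f t) := by
        rw [intervalIntegral.integral_sub _root_.intervalIntegrable_const
          (hcontf.intervalIntegrable _ _),
          intervalIntegral.integral_const, intervalIntegral.integral_symm 0 u]
        simp only [hFdef, smul_eq_mul, mul_one]
        ring
      have hup : F u - u ≤ B/2 := by
        rw [hrepr]
        have hmono : ∫ t in u..(0:ℝ), (1 - f t) ≤ ∫ t in u..(0:ℝ), B * Real.exp (2*t) := by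
          apply intervalIntegral.integral_mono_on hu.le
            ((_root_.intervalIntegrable_const).sub (hcontf.intervalIntegrable _ _))
            (by apply Continuous.intervalIntegrable; fun_prop)
          intro t _; exact hfB t
        have hcalc : ∫ t in u..(0:ℝ), B * Real.exp (2*t)
            = B/2 - B/2 * Real.exp (2*u) := by
          have hd : ∀ t ∈ Set.uIcc u (0:ℝ), HasDerivAt (fun s => B/2 * Real.exp (2*s))
              (B * Real.exp (2*t)) t := by
            intro t _
            have h1 : HasDerivAt (fun s : ℝ => 2*s) 2 t := by
              simpa using (hasDerivAt_id t).const_mul 2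
            have := (h1.exp).const_mul (B/2)
            refine this.congr_deriv ?_
            ring
          rw [intervalIntegral.integral_eq_sub_of_hasDerivAt hd
            (by apply Continuous.intervalIntegrable; fun_prop)]
          simp
        have hexp : 0 < Real.exp (2*u) := Real.exp_pos _
        nlinarith
      have hlow : 0 ≤ F u - u := by
        rw [hrepr]
        apply intervalIntegral.integral_nonneg hu.le
        intro t _; linarith [(hf1 t).2]
      rw [abs_of_nonneg (by linarith)]
      linarith
  -- final limits
  obtain ⟨a, ha, hatend⟩ := Gg_limit hγ
  obtain ⟨b, hb, hbtend⟩ := Gg_limit (adm_symm hγ)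
  have hfin_top : Tendsto f atTop (𝓝[>] (0:ℝ)) :=
    tendsto_nhdsWithin_iff.2 ⟨hftop, Filter.Eventually.of_forall (fun u => (hf1 u).1)⟩
  have hfin_bot : Tendsto (fun u => 1 - f u) atBot (𝓝[>] (0:ℝ)) := by
    refine tendsto_nhdsWithin_iff.2 ⟨?_, Filter.Eventually.of_forall
      (fun u => by have := (hf1 u).2; simpa using sub_pos.2 this)⟩
    have := hfbot.const_sub 1
    simpa using this
  refine ⟨F, Gg γ, hCD, ⟨A/2 + B/2, hFbound⟩, by rw [hF']; exact hf1,
    by rw [hF']; exact hfbot, by rw [hF']; exact hftop,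
    by rw [hF']; exact hGf, by rw [hF']; exact hf2,
    fun x hx => by simp [hF'', hGf x hx],
    ⟨a, ha, ?_⟩, ⟨b, hb, ?_⟩⟩
  · have hcomp := hatend.comp hfin_top
    apply hcomp.congr
    intro u
    simp only [Function.comp_apply, hf2 u, hF'']
    ring
  · have hcomp := hbtend.comp hfin_bot
    apply hcomp.congr
    intro u
    simp only [Function.comp_apply, hF'']
    rw [Gg_symm γ (1 - f u), show (1:ℝ) - (1 - f u) = f u by ring, hf2 u]
    rw [show (2:ℝ) * -u = -(2*u) by ring]
    ring
end

section
/- For any smooth S¹-invariant Kähler form ω on ℙ¹ with ∫_{ℙ¹}ω = 1, the function γ_ω belongs to 𝒢; in particular γ_ω(x) = 2x + O(x²) as x → 0⁺ and γ_ω(x) = 2(1-x) + O((1-x)²) as x → 1⁻. -/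
open Set Filter

open Set Filter

lemma keyLemma (p H : ℝ → ℝ) (hp : ContDiff ℝ 2 p)
    (hp0 : deriv p 0 = 0) (hppos : ∀ r, 0 < p r)
    (hH : ∀ r : ℝ, 0 < r → HasDerivAt H (2 * r * p r) r)
    (hH0 : Tendsto H (nhdsWithin 0 (Set.Ioi 0)) (nhds 0)) :
    ∃ r₀ ∈ Set.Ioc (0:ℝ) 1, ∃ C > 0,
      (∀ r ∈ Set.Ioc (0:ℝ) r₀, |2 * r^2 * p r - 2 * H r| ≤ C * (H r)^2)
      ∧ StrictMonoOn H (Set.Ioi (0:ℝ)) := by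
  -- differentiability facts for p
  have h2 : ContDiff ℝ (1+1) p := by exact_mod_cast hp
  rw [contDiff_succ_iff_deriv] at h2
  obtain ⟨hdp, -, hdp1⟩ := h2
  have h1 : ContDiff ℝ (0+1) (deriv p) := by exact_mod_cast hdp1
  rw [contDiff_succ_iff_deriv] at h1
  obtain ⟨hdp', -, hdp2⟩ := h1
  have hcpp : Continuous (deriv (deriv p)) := hdp2.continuous
  -- bound K on second derivative
  obtain ⟨K, hK⟩ := (isCompact_Icc (a := (-1:ℝ)) (b := 1)).exists_bound_of_continuousOn
    hcpp.continuousOn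
  have hK0 : 0 ≤ K := le_trans (norm_nonneg _) (hK 0 (by norm_num))
  -- |p'(r)| ≤ K r on [0,1]
  have hp' : ∀ r ∈ Icc (0:ℝ) 1, |deriv p r| ≤ K * r := by
    intro r hr
    have := (convex_Icc (-1:ℝ) 1).norm_image_sub_le_of_norm_hasDerivWithin_le
      (f := deriv p) (f' := deriv (deriv p))
      (fun x _ => (hdp' x).hasDerivAt.hasDerivWithinAt) hK
      (x := 0) (y := r) (by norm_num) ⟨le_trans (by norm_num) hr.1, hr.2⟩
    simpa [hp0, Real.norm_eq_abs, abs_of_nonneg hr.1] using this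
  -- g and its derivative
  set g : ℝ → ℝ := fun r => H r - r^2 * p r with hg_def
  have hg : ∀ r : ℝ, 0 < r → HasDerivAt g (-(r^2 * deriv p r)) r := by
    intro r hr
    have h1 : HasDerivAt (fun r : ℝ => r^2 * p r) (2*r * p r + r^2 * deriv p r) r := by
      have := (hasDerivAt_pow 2 r).mul (hdp r).hasDerivAt
      exact this.congr_deriv (by norm_num)
    have := (hH r hr).sub h1
    exact this.congr_deriv (by ring)
  -- bound |g r| ≤ K r^4 on (0,1]
  have hgb : ∀ r ∈ Ioc (0:ℝ) 1, |g r| ≤ K * r^4 := by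
    intro r hr
    have hstep : ∀ a ∈ Ioc (0:ℝ) r, |g r - g a| ≤ K * r^4 := by
      intro a ha
      have hb : ∀ t ∈ Icc a r, ‖-(t^2 * deriv p t)‖ ≤ K * r^3 := by
        intro t ht
        have ht0 : 0 < t := lt_of_lt_of_le ha.1 ht.1
        have htr : t ≤ r := ht.2
        have h1 : |deriv p t| ≤ K * t := hp' t ⟨ht0.le, le_trans htr hr.2⟩
        have : ‖-(t^2 * deriv p t)‖ = t^2 * |deriv p t| := by
          rw [norm_neg, Real.norm_eq_abs, abs_mul, abs_of_nonneg (sq_nonneg t)]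
        rw [this]
        calc t^2 * |deriv p t| ≤ t^2 * (K * t) := by
              exact mul_le_mul_of_nonneg_left h1 (sq_nonneg t)
          _ = K * t^3 := by ring
          _ ≤ K * r^3 := by
              exact mul_le_mul_of_nonneg_left (pow_le_pow_left₀ ht0.le htr 3) hK0
      have := (convex_Icc a r).norm_image_sub_le_of_norm_hasDerivWithin_le
        (f := g) (f' := fun t => -(t^2 * deriv p t))
        (fun t ht => (hg t (lt_of_lt_of_le ha.1 ht.1)).hasDerivWithinAt) hb
        (x := a) (y := r)
        ⟨le_refl _, ha.2⟩ ⟨ha.2, le_refl _⟩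
      calc |g r - g a| ≤ K * r^3 * ‖r - a‖ := this
        _ ≤ K * r^3 * r := by
            apply mul_le_mul_of_nonneg_left _ (mul_nonneg hK0 (pow_nonneg hr.1.le 3))
            rw [Real.norm_eq_abs, abs_of_nonneg (by linarith [ha.1, ha.2])]
            linarith [ha.1]
        _ = K * r^4 := by ring
    -- take limit a → 0+
    have hg0 : Tendsto g (nhdsWithin 0 (Ioi 0)) (nhds 0) := by
      have h2 : Tendsto (fun a : ℝ => a^2 * p a) (nhdsWithin 0 (Ioi 0)) (nhds 0) := by
        have hc : Continuous (fun a : ℝ => a^2 * p a) := (continuous_pow 2).mul hp.continuous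
        have := hc.tendsto 0
        simp only [ne_eq, OfNat.ofNat_ne_zero, not_false_eq_true, zero_pow, zero_mul] at this
        exact tendsto_nhdsWithin_of_tendsto_nhds (by simpa using this)
      simpa using hH0.sub h2
    have hlim : Tendsto (fun a => |g r - g a|) (nhdsWithin 0 (Ioi 0)) (nhds |g r|) := by
      have : Tendsto (fun a => g r - g a) (nhdsWithin 0 (Ioi 0)) (nhds (g r - 0)) :=
        tendsto_const_nhds.sub hg0
      simpa using this.abs
    refine le_of_tendsto hlim ?_
    filter_upwards [Ioc_mem_nhdsGT_of_mem ⟨le_refl 0, hr.1⟩] with a ha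
    exact hstep a ha
  -- monotonicity
  have hmono : StrictMonoOn H (Set.Ioi (0:ℝ)) := by
    apply strictMonoOn_of_deriv_pos (convex_Ioi 0)
    · intro r hr
      exact (hH r hr).differentiableAt.continuousAt.continuousWithinAt
    · intro r hr
      rw [interior_Ioi] at hr
      rw [(hH r hr).deriv]
      have hr' : (0:ℝ) < r := hr
      have := hppos r
      positivity
  -- choose r₀
  have hp0pos : 0 < p 0 := hppos 0
  obtain ⟨δ, hδ0, hδ⟩ := Metric.continuousAt_iff.mp (hdp.continuous.continuousAt (x := 0))
    (p 0 / 2) (by linarith)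
  set t : ℝ := Real.sqrt (p 0 / (4 * (K + 1))) with ht_def
  have ht0 : 0 < t := Real.sqrt_pos.mpr (by positivity)
  have ht2 : t^2 = p 0 / (4 * (K + 1)) := Real.sq_sqrt (by positivity)
  set r₀ : ℝ := min 1 (min (δ/2) t) with hr₀_def
  have hr₀0 : 0 < r₀ := by
    apply lt_min one_pos (lt_min (by linarith) ht0)
  have hr₀1 : r₀ ≤ 1 := min_le_left _ _
  -- on (0, r₀]: p r ≥ p 0 / 2, H r ≥ (p 0/4) r²
  have hplow : ∀ r ∈ Ioc (0:ℝ) r₀, p 0 / 2 ≤ p r := by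
    intro r hr
    have hrδ : r < δ := by
      have : r₀ ≤ δ/2 := le_trans (min_le_right _ _) (min_le_left _ _)
      linarith [hr.2]
    have := hδ (x := r) (by simpa [Real.dist_eq, abs_of_nonneg hr.1.le] using hrδ)
    rw [Real.dist_eq] at this
    cases abs_lt.mp this with
    | intro h1 h2 => linarith
  have hHlow : ∀ r ∈ Ioc (0:ℝ) r₀, p 0 / 4 * r^2 ≤ H r := by
    intro r hr
    have h1 : |g r| ≤ K * r^4 := hgb r ⟨hr.1, le_trans hr.2 hr₀1⟩
    have h2 : p 0 / 2 ≤ p r := hplow r hr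
    have hrt : r ≤ t := le_trans hr.2 (le_trans (min_le_right _ _) (min_le_right _ _))
    have hKr : K * r^2 ≤ p 0 / 4 := by
      have : r^2 ≤ t^2 := by nlinarith [hr.1]
      calc K * r^2 ≤ (K+1) * t^2 := by nlinarith [hr.1, sq_nonneg r]
        _ = p 0 / 4 := by rw [ht2]; field_simp
    have hgr : -(K * r^4) ≤ g r := neg_le_of_abs_le h1
    have : H r = g r + r^2 * p r := by simp [hg_def]
    rw [this]
    nlinarith [sq_nonneg r, hr.1]
  refine ⟨r₀, ⟨hr₀0, hr₀1⟩, 32 * K / (p 0)^2 + 1, by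
    have h0 : (0:ℝ) ≤ 32 * K / (p 0)^2 := div_nonneg (by linarith) (sq_nonneg _)
    linarith, ?_, hmono⟩
  intro r hr
  have h1 : |g r| ≤ K * r^4 := hgb r ⟨hr.1, le_trans hr.2 hr₀1⟩
  have h2 : p 0 / 4 * r^2 ≤ H r := hHlow r hr
  have hHr0 : 0 < H r := lt_of_lt_of_le (by have := hp0pos; have hr1 : (0:ℝ) < r := hr.1; positivity) h2
  have heq : 2 * r^2 * p r - 2 * H r = -(2 * g r) := by simp [hg_def]; ring
  rw [heq, abs_neg, abs_mul, abs_of_nonneg (by norm_num : (0:ℝ) ≤ 2)]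
  have h3 : r^4 ≤ 16 / (p 0)^2 * (H r)^2 := by
    have hsq : (p 0 / 4 * r^2)^2 ≤ (H r)^2 := by
      apply sq_le_sq' _ h2
      nlinarith [sq_nonneg r]
    have hp2 : 0 < (p 0)^2 := by positivity
    rw [div_mul_eq_mul_div, le_div_iff₀ hp2]
    nlinarith [hsq]
  calc 2 * |g r| ≤ 2 * (K * r^4) := by linarith
    _ ≤ 2 * (K * (16 / (p 0)^2 * (H r)^2)) := by
        apply mul_le_mul_of_nonneg_left (mul_le_mul_of_nonneg_left h3 hK0) (by norm_num)
    _ = 32 * K / (p 0)^2 * (H r)^2 := by ring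
    _ ≤ (32 * K / (p 0)^2 + 1) * (H r)^2 := by nlinarith [sq_nonneg (H r)]



/-- if `F` is the potential (in logarithmic coordinates) of a
smooth S¹-invariant normalized Kähler form `ω` on ℙ¹ — encoded by the existence
of smooth, positive, rotation-invariant densities `ψ` (chart at `0`, where
`ψ(z) = -½ e^{2u} F''(u)` with `u = -log|z|`) and `ψ'` (chart at `∞`) — then
`γ_ω(x) = -F''(G x)` belongs to `𝒢`: it is positive on `(0,1)` and equals
`2 min(x,1-x) + O(min(x,1-x)²)` near the boundary. -/
theorem stmt14 (F G : ℝ → ℝ) (ψ ψ' : ℂ → ℝ)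
    (hF : ContDiff ℝ 2 F)
    (hrange : ∀ u, deriv F u ∈ Set.Ioo (0:ℝ) 1)
    (hGl : ∀ u, G (deriv F u) = u)
    (hGr : ∀ x ∈ Set.Ioo (0:ℝ) 1, deriv F (G x) = x)
    (hψ : ContDiff ℝ (⊤ : ℕ∞) ψ) (hψpos : ∀ z, 0 < ψ z)
    (hψinv : ∀ (z : ℂ) (θ : ℝ), ψ (Complex.exp (θ * Complex.I) * z) = ψ z)
    (hψeq : ∀ z : ℂ, z ≠ 0 →
      ψ z = -((1/2) * Real.exp (2 * (-(Real.log (‖z‖)))) *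
        deriv (deriv F) (-(Real.log (‖z‖)))))
    (hψ' : ContDiff ℝ (⊤ : ℕ∞) ψ') (hψ'pos : ∀ w, 0 < ψ' w)
    (hψ'inv : ∀ (w : ℂ) (θ : ℝ), ψ' (Complex.exp (θ * Complex.I) * w) = ψ' w)
    (hψ'eq : ∀ w : ℂ, w ≠ 0 →
      ψ' w = -((1/2) * Real.exp (-(2 * Real.log (‖w‖))) *
        deriv (deriv F) (Real.log (‖w‖)))) :
    (∀ x ∈ Set.Ioo (0:ℝ) 1, 0 < -(deriv (deriv F) (G x))) ∧
    ∃ C > (0:ℝ), ∀ x ∈ Set.Ioo (0:ℝ) 1,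
      |(-(deriv (deriv F) (G x))) - 2 * min x (1-x)| ≤ C * (min x (1-x))^2 := by
  -- derivative facts for F
  have hF2 : ContDiff ℝ (1+1) F := by exact_mod_cast hF
  rw [contDiff_succ_iff_deriv] at hF2
  obtain ⟨hdF, -, hdF1⟩ := hF2
  have hF1 : ContDiff ℝ (0+1) (deriv F) := by exact_mod_cast hdF1
  rw [contDiff_succ_iff_deriv] at hF1
  obtain ⟨hdF', -, hdF2⟩ := hF1
  have hcF'' : Continuous (deriv (deriv F)) := hdF2.continuous
  -- F'' < 0 everywhere
  have hFneg : ∀ u, deriv (deriv F) u < 0 := by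
    intro u
    have hz : ((Real.exp (-u) : ℝ) : ℂ) ≠ 0 := by
      exact_mod_cast (Real.exp_pos (-u)).ne'
    have h := hψeq _ hz
    rw [Complex.norm_real, Real.norm_eq_abs, abs_of_pos (Real.exp_pos _), Real.log_exp] at h
    have hpos := hψpos ((Real.exp (-u) : ℝ) : ℂ)
    rw [h] at hpos
    simp only [neg_neg] at hpos
    nlinarith [Real.exp_pos (2 * u)]
  have hanti : StrictAnti (deriv F) := strictAnti_of_deriv_neg hFneg
  have hGanti : ∀ x y : ℝ, x ∈ Ioo (0:ℝ) 1 → y ∈ Ioo (0:ℝ) 1 → x ≤ y → G y ≤ G x := by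
    intro x y hx hy hxy
    by_contra h
    push_neg at h
    have := hanti h
    rw [hGr x hx, hGr y hy] at this
    linarith
  constructor
  · intro x _; linarith [hFneg (G x)]
  -- the two boundary densities as real functions
  set p : ℝ → ℝ := fun r => ψ (r : ℂ) with hp_def
  set q : ℝ → ℝ := fun r => ψ' (r : ℂ) with hq_def
  have hpc : ContDiff ℝ 2 p := (hψ.of_le (WithTop.coe_le_coe.mpr le_top)).comp Complex.ofRealCLM.contDiff
  have hqc : ContDiff ℝ 2 q := (hψ'.of_le (WithTop.coe_le_coe.mpr le_top)).comp Complex.ofRealCLM.contDiff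
  have hpev : ∀ r : ℝ, p (-r) = p r := by
    intro r
    have h1 : ((-r : ℝ) : ℂ) = Complex.exp ((Real.pi : ℝ) * Complex.I) * (r : ℂ) := by
      rw [Complex.exp_pi_mul_I]; push_cast; ring
    simp only [hp_def]
    rw [h1, hψinv]
  have hqev : ∀ r : ℝ, q (-r) = q r := by
    intro r
    have h1 : ((-r : ℝ) : ℂ) = Complex.exp ((Real.pi : ℝ) * Complex.I) * (r : ℂ) := by
      rw [Complex.exp_pi_mul_I]; push_cast; ring
    simp only [hq_def]
    rw [h1, hψ'inv]
  have even_deriv : ∀ f : ℝ → ℝ, ContDiff ℝ 2 f → (∀ r, f (-r) = f r) → deriv f 0 = 0 := by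
    intro f hf hev
    have hdf : Differentiable ℝ f := hf.differentiable (by norm_num)
    have h1 : HasDerivAt f (deriv f 0) 0 := (hdf 0).hasDerivAt
    have h2 : HasDerivAt (fun r => f (-r)) (deriv f 0 * (-1)) 0 := by
      have h1' : HasDerivAt f (deriv f 0) (-(0:ℝ)) := by simpa using h1
      have := h1'.comp 0 (hasDerivAt_neg (0:ℝ))
      exact this
    have h3 : HasDerivAt f (-(deriv f 0)) 0 := by
      have : (fun r => f (-r)) = f := funext hev
      rw [this] at h2
      simpa using h2
    have := h1.unique h3
    linarith
  have hp0 : deriv p 0 = 0 := even_deriv p hpc hpev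
  have hq0 : deriv q 0 = 0 := even_deriv q hqc hqev
  have hppos : ∀ r, 0 < p r := fun r => hψpos _
  have hqpos : ∀ r, 0 < q r := fun r => hψ'pos _
  -- key identity for F'' in terms of p, q
  have hFp : ∀ r : ℝ, 0 < r → deriv (deriv F) (-(Real.log r)) = -(2 * r^2 * p r) := by
    intro r hr
    have hz : ((r : ℝ) : ℂ) ≠ 0 := by exact_mod_cast hr.ne'
    have h := hψeq _ hz
    rw [Complex.norm_real, Real.norm_eq_abs, abs_of_pos hr] at h
    have hexp : Real.exp (2 * (-(Real.log r))) = (r^2)⁻¹ := by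
      rw [show 2 * (-(Real.log r)) = -(Real.log (r^2)) by
        rw [Real.log_pow]; push_cast; ring]
      rw [Real.exp_neg, Real.exp_log (by positivity)]
    rw [hexp] at h
    have hr2 : (0:ℝ) < r^2 := by positivity
    have : p r = -(1/2 * (r^2)⁻¹ * deriv (deriv F) (-(Real.log r))) := h
    field_simp at this
    linarith
  have hFq : ∀ r : ℝ, 0 < r → deriv (deriv F) (Real.log r) = -(2 * r^2 * q r) := by
    intro r hr
    have hz : ((r : ℝ) : ℂ) ≠ 0 := by exact_mod_cast hr.ne'
    have h := hψ'eq _ hz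
    rw [Complex.norm_real, Real.norm_eq_abs, abs_of_pos hr] at h
    have hexp : Real.exp (-(2 * Real.log r)) = (r^2)⁻¹ := by
      rw [show 2 * Real.log r = Real.log (r^2) by rw [Real.log_pow]; push_cast; ring]
      rw [Real.exp_neg, Real.exp_log (by positivity)]
    rw [hexp] at h
    have hr2 : (0:ℝ) < r^2 := by positivity
    have : q r = -(1/2 * (r^2)⁻¹ * deriv (deriv F) (Real.log r)) := h
    field_simp at this
    linarith
  -- the two boundary "profile" functions
  set H₀ : ℝ → ℝ := fun r => deriv F (-(Real.log r)) with hH₀_def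
  set H₁ : ℝ → ℝ := fun r => 1 - deriv F (Real.log r) with hH₁_def
  have hH₀d : ∀ r : ℝ, 0 < r → HasDerivAt H₀ (2 * r * p r) r := by
    intro r hr
    have hlog : HasDerivAt (fun r : ℝ => -(Real.log r)) (-r⁻¹) r :=
      (Real.hasDerivAt_log hr.ne').neg
    have hcomp := ((hdF' (-(Real.log r))).hasDerivAt).comp r hlog
    have heq : deriv (deriv F) (-(Real.log r)) * -r⁻¹ = 2 * r * p r := by
      rw [hFp r hr]; field_simp
    rw [heq] at hcomp
    exact hcomp
  have hH₁d : ∀ r : ℝ, 0 < r → HasDerivAt H₁ (2 * r * q r) r := by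
    intro r hr
    have hlog : HasDerivAt (fun r : ℝ => Real.log r) r⁻¹ r := Real.hasDerivAt_log hr.ne'
    have hcomp := ((hdF' (Real.log r)).hasDerivAt).comp r hlog
    have : HasDerivAt H₁ (-(deriv (deriv F) (Real.log r) * r⁻¹)) r := by
      have := (hasDerivAt_const r (1:ℝ)).sub hcomp
      exact this.congr_deriv (by ring)
    have heq : -(deriv (deriv F) (Real.log r) * r⁻¹) = 2 * r * q r := by
      rw [hFq r hr]; field_simp
    rw [heq] at this
    exact this
  -- limits at 0+
  have hH₀0 : Tendsto H₀ (nhdsWithin 0 (Set.Ioi 0)) (nhds 0) := by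
    rw [Metric.tendsto_nhdsWithin_nhds]
    intro ε hε
    set x : ℝ := min (ε/2) (1/2) with hx_def
    have hx : x ∈ Ioo (0:ℝ) 1 := ⟨lt_min (by linarith) (by norm_num),
      lt_of_le_of_lt (min_le_right _ _) (by norm_num)⟩
    refine ⟨Real.exp (-(G x)), Real.exp_pos _, ?_⟩
    intro r hr hrd
    rw [Real.dist_eq, sub_zero, abs_of_pos hr] at hrd
    have hlog : Real.log r < -(G x) := by
      calc Real.log r < Real.log (Real.exp (-(G x))) := Real.log_lt_log hr hrd
        _ = -(G x) := Real.log_exp _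
    have h1 : deriv F (-(Real.log r)) < x := by
      have := hanti (show G x < -(Real.log r) by linarith)
      rwa [hGr x hx] at this
    have h2 : 0 < deriv F (-(Real.log r)) := (hrange _).1
    rw [Real.dist_eq, sub_zero]
    rw [abs_of_pos h2]
    calc deriv F (-(Real.log r)) < x := h1
      _ ≤ ε/2 := min_le_left _ _
      _ < ε := by linarith
  have hH₁0 : Tendsto H₁ (nhdsWithin 0 (Set.Ioi 0)) (nhds 0) := by
    rw [Metric.tendsto_nhdsWithin_nhds]
    intro ε hε
    set y : ℝ := min (ε/2) (1/2) with hy_def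
    set x : ℝ := 1 - y with hx_def
    have hy0 : 0 < y := lt_min (by linarith) (by norm_num)
    have hy1 : y ≤ 1/2 := min_le_right _ _
    have hx : x ∈ Ioo (0:ℝ) 1 := ⟨by simp only [hx_def]; linarith, by simp only [hx_def]; linarith⟩
    refine ⟨Real.exp (G x), Real.exp_pos _, ?_⟩
    intro r hr hrd
    rw [Real.dist_eq, sub_zero, abs_of_pos hr] at hrd
    have hlog : Real.log r < G x := by
      calc Real.log r < Real.log (Real.exp (G x)) := Real.log_lt_log hr hrd
        _ = G x := Real.log_exp _
    have h1 : x < deriv F (Real.log r) := by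
      have := hanti hlog
      rwa [hGr x hx] at this
    have h2 : deriv F (Real.log r) < 1 := (hrange _).2
    rw [Real.dist_eq, sub_zero]
    have : H₁ r = 1 - deriv F (Real.log r) := rfl
    rw [this, abs_of_nonneg (by linarith)]
    have : y ≤ ε/2 := min_le_left _ _
    simp only [hx_def] at h1
    linarith
  -- apply the key lemma on both sides
  obtain ⟨r₀, hr₀, C₀, hC₀, hbd₀, hmono₀⟩ := keyLemma p H₀ hpc hp0 hppos hH₀d hH₀0
  obtain ⟨r₁, hr₁, C₁, hC₁, hbd₁, hmono₁⟩ := keyLemma q H₁ hqc hq0 hqpos hH₁d hH₁0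
  set a : ℝ := min (H₀ r₀) (1/2) with ha_def
  set b : ℝ := min (H₁ r₁) (1/2) with hb_def
  have hH₀r₀ : H₀ r₀ ∈ Ioo (0:ℝ) 1 := hrange _
  have hH₁r₁pos : 0 < H₁ r₁ := by
    have := (hrange (Real.log r₁)).2
    simp only [hH₁_def]; linarith
  have ha0 : 0 < a := lt_min hH₀r₀.1 (by norm_num)
  have hb0 : 0 < b := lt_min hH₁r₁pos (by norm_num)
  have ha2 : a ≤ 1/2 := min_le_right _ _
  have hb2 : b ≤ 1/2 := min_le_right _ _
  -- middle-region bound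
  obtain ⟨M, hM⟩ := (isCompact_Icc (a := G (1-b)) (b := G a)).exists_bound_of_continuousOn
    hcF''.continuousOn
  set Mb : ℝ := max M 0 with hMb_def
  have hMb : ∀ t ∈ Icc (G (1-b)) (G a), |deriv (deriv F) t| ≤ Mb := by
    intro t ht
    exact le_trans (hM t ht) (le_max_left _ _)
  set δm : ℝ := min a b with hδm_def
  have hδm0 : 0 < δm := lt_min ha0 hb0
  set C₂ : ℝ := (Mb + 1) / δm^2 with hC₂_def
  have hC₂0 : 0 < C₂ := by
    apply div_pos _ (by positivity)
    have : (0:ℝ) ≤ Mb := le_max_right _ _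
    linarith
  refine ⟨max C₀ (max C₁ C₂), lt_of_lt_of_le hC₀ (le_max_left _ _), ?_⟩
  intro x hx
  rcases le_or_gt x a with hxa | hxa
  · -- near 0
    have hmin : min x (1-x) = x := min_eq_left (by linarith [hx.1])
    set r : ℝ := Real.exp (-(G x)) with hr_def
    have hr : 0 < r := Real.exp_pos _
    have hlogr : -(Real.log r) = G x := by rw [hr_def, Real.log_exp]; ring
    have hH₀r : H₀ r = x := by
      simp only [hH₀_def]; rw [hlogr, hGr x hx]
    have hrr₀ : r ≤ r₀ := by
      by_contra h
      push_neg at h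
      have := hmono₀ (mem_Ioi.mpr hr₀.1) (mem_Ioi.mpr hr) h
      rw [hH₀r] at this
      have : H₀ r₀ < a := lt_of_lt_of_le this hxa
      exact absurd this (not_lt.mpr (min_le_left _ _))
    have hb := hbd₀ r ⟨hr, hrr₀⟩
    rw [hH₀r] at hb
    have hγ : -(deriv (deriv F) (G x)) = 2 * r^2 * p r := by
      rw [← hlogr, hFp r hr]; ring
    rw [hmin, hγ]
    calc |2 * r^2 * p r - 2 * x| ≤ C₀ * x^2 := hb
      _ ≤ max C₀ (max C₁ C₂) * x^2 := by
          apply mul_le_mul_of_nonneg_right (le_max_left _ _) (sq_nonneg _)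
  · rcases le_or_gt (1-x) b with hxb | hxb
    · -- near 1
      have hmin : min x (1-x) = 1-x := min_eq_right (by linarith)
      set r : ℝ := Real.exp (G x) with hr_def
      have hr : 0 < r := Real.exp_pos _
      have hlogr : Real.log r = G x := Real.log_exp _
      have hH₁r : H₁ r = 1 - x := by
        simp only [hH₁_def]; rw [hlogr, hGr x hx]
      have hrr₁ : r ≤ r₁ := by
        by_contra h
        push_neg at h
        have := hmono₁ (mem_Ioi.mpr hr₁.1) (mem_Ioi.mpr hr) h
        rw [hH₁r] at this
        have : H₁ r₁ < b := lt_of_lt_of_le this hxb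
        exact absurd this (not_lt.mpr (min_le_left _ _))
      have hb' := hbd₁ r ⟨hr, hrr₁⟩
      rw [hH₁r] at hb'
      have hγ : -(deriv (deriv F) (G x)) = 2 * r^2 * q r := by
        rw [← hlogr, hFq r hr]; ring
      rw [hmin, hγ]
      calc |2 * r^2 * q r - 2 * (1-x)| ≤ C₁ * (1-x)^2 := hb'
        _ ≤ max C₀ (max C₁ C₂) * (1-x)^2 := by
            apply mul_le_mul_of_nonneg_right
              (le_trans (le_max_left _ _) (le_max_right _ _)) (sq_nonneg _)
    · -- middle region
      have h1b : (1-b) ∈ Ioo (0:ℝ) 1 := ⟨by linarith, by linarith⟩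
      have haI : a ∈ Ioo (0:ℝ) 1 := ⟨ha0, by linarith⟩
      have hGx1 : G (1-b) ≤ G x := hGanti x (1-b) hx h1b (by linarith)
      have hGx2 : G x ≤ G a := hGanti a x haI hx (by linarith)
      have hFbd : |deriv (deriv F) (G x)| ≤ Mb := hMb _ ⟨hGx1, hGx2⟩
      have hminlb : δm ≤ min x (1-x) := by
        apply le_min (le_trans (min_le_left _ _) hxa.le)
        exact le_trans (min_le_right _ _) (by linarith)
      have hminub : min x (1-x) ≤ 1/2 := by
        rcases le_total x (1-x) with h | h
        · rw [min_eq_left h]; linarith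
        · rw [min_eq_right h]; linarith
      have hmin0 : 0 < min x (1-x) := lt_of_lt_of_le hδm0 hminlb
      have hbound : |(-(deriv (deriv F) (G x))) - 2 * min x (1-x)| ≤ Mb + 1 := by
        have h1 : |(-(deriv (deriv F) (G x)))| ≤ Mb := by rwa [abs_neg]
        have h2 : |2 * min x (1-x)| ≤ 1 := by
          rw [abs_of_pos (by linarith)]
          linarith
        calc |(-(deriv (deriv F) (G x))) - 2 * min x (1-x)|
            ≤ |(-(deriv (deriv F) (G x)))| + |2 * min x (1-x)| := abs_sub _ _
          _ ≤ Mb + 1 := add_le_add h1 h2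
      calc |(-(deriv (deriv F) (G x))) - 2 * min x (1-x)| ≤ Mb + 1 := hbound
        _ = C₂ * δm^2 := by rw [hC₂_def]; field_simp
        _ ≤ C₂ * (min x (1-x))^2 := by
            apply mul_le_mul_of_nonneg_left _ hC₂0.le
            apply sq_le_sq' (by linarith) hminlb
        _ ≤ max C₀ (max C₁ C₂) * (min x (1-x))^2 := by
            apply mul_le_mul_of_nonneg_right
              (le_trans (le_max_right _ _) (le_max_right _ _)) (sq_nonneg _)
end
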